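/- arXiv:2512.22510 — 11 statements merged into one kernel-verified Lean document; each statement's English description precedes it below -/
import Mathlib

section
/- Let f be a nonzero real polynomial and let ω > 0. Then there exists a real number ℓ such that the Chiellini identity g_f′·f − g_f·f′ + ℓ(ℓ+1)·f³ = 0 holds (as an identity of polynomials) if and only if there exists a real number k ≠ 0 with f = k·X. (In other words, the isochronicity condition g(x) = ω²x + I(x)²/x³ is compatible with the Chiellini condition for a real parameter ℓ if and only if f(x) = kx, in which case the system is the modified Emden equation.) -/
/-!
The Chiellini identity says `(g / f)' = -ℓ(ℓ+1) f`; since a polynomial whose Wronskian with `f`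
vanishes is a constant multiple of `f`, this means `g = f Q` with `Q' = -ℓ(ℓ+1) f`.
Comparing the coefficients of `X³` and `X⁴` in `X³ f Q = ω² X⁴ + I²` gives `f(0) = 0` and
`f'(0) ≠ 0`, because `ω > 0` and `ℓ(ℓ+1) ≥ -1/4`. If `f = a Xᵈ + b Xˢ + ⋯` with `0 < s < d`, the
coefficients of `X²ᵈ⁺⁴` and `Xᵈ⁺ˢ⁺⁴` of the same identity force `(d+1)(d-s)s = 0`, so `f = k X`.
Conversely, for `f = k X` one finds `I = k X³ / 3`, `g = ω² X + k² X³ / 9`, and the identity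
holds with `ℓ = -1/3`.
-/

open Polynomial

namespace Polynomial

theorem wronskian_mul_mul {R : Type*} [CommRing R] (d a b : R[X]) :
    wronskian (d * a) (d * b) = d ^ 2 * wronskian a b := by
  simp only [wronskian, derivative_mul]
  ring

variable {K : Type*} [Field K] [CharZero K]

theorem exists_derivative_eq (q : K[X]) : ∃ P, derivative P = q := by
  induction q using Polynomial.induction_on' with
  | add p q hp hq =>
    obtain ⟨P, rfl⟩ := hp
    obtain ⟨Q, rfl⟩ := hq
    exact ⟨P + Q, derivative_add⟩
  | monomial n a =>
    refine ⟨C (a / (n + 1)) * X ^ (n + 1), ?_⟩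
    rw [derivative_C_mul_X_pow, ← C_mul_X_pow_eq_monomial, Nat.add_sub_cancel]
    push_cast
    field_simp

theorem coeff_succ_eq_of_derivative_eq {P q : K[X]} (h : derivative P = q) (n : ℕ) :
    P.coeff (n + 1) = q.coeff n / (n + 1) := by
  rw [← h, coeff_derivative]
  field_simp

theorem natDegree_le_of_derivative_eq {P q : K[X]} {n : ℕ} (h : derivative P = q)
    (hq : q.natDegree ≤ n) : P.natDegree ≤ n + 1 := by
  refine natDegree_le_iff_coeff_eq_zero.mpr fun m hm => ?_
  obtain ⟨m, rfl⟩ : ∃ k, m = k + 1 := ⟨m - 1, by omega⟩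
  rw [coeff_succ_eq_of_derivative_eq h, coeff_eq_zero_of_natDegree_lt (by omega), zero_div]

theorem exists_eq_C_mul_of_wronskian_eq_zero {f r : K[X]} (hf : f ≠ 0)
    (hw : wronskian f r = 0) : ∃ a, r = C a * f := by
  classical
  obtain ⟨f₁, r₁, hf₁, hr₁, hu⟩ := extract_gcd f r
  generalize gcd f r = d at hf₁ hr₁
  subst hf₁ hr₁
  rw [wronskian_mul_mul, mul_eq_zero, or_iff_right (pow_ne_zero 2 (left_ne_zero_of_mul hf))] at hw
  obtain ⟨hf₁', hr₁'⟩ := ((gcd_isUnit_iff f₁ r₁).mp hu).wronskian_eq_zero_iff.mp hw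
  rw [eq_C_of_derivative_eq_zero hf₁'] at hf ⊢
  rw [eq_C_of_derivative_eq_zero hr₁']
  have hf₁0 : f₁.coeff 0 ≠ 0 := fun h => hf (by rw [h, C_0, mul_zero])
  refine ⟨r₁.coeff 0 / f₁.coeff 0, ?_⟩
  rw [mul_left_comm, ← C_mul, div_mul_cancel₀ _ hf₁0]

theorem exists_eq_mul_of_wronskian_eq {f g h : K[X]} (hf : f ≠ 0)
    (hw : wronskian f g = f ^ 2 * h) : ∃ Q, derivative Q = h ∧ g = f * Q := by
  obtain ⟨P, hP⟩ := exists_derivative_eq h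
  have hw' : wronskian f (g - f * P) = 0 := by
    simp only [wronskian, derivative_sub, derivative_mul, hP] at hw ⊢
    linear_combination hw
  obtain ⟨a, ha⟩ := exists_eq_C_mul_of_wronskian_eq_zero hf hw'
  refine ⟨P + C a, by rw [derivative_add, derivative_C, add_zero, hP], ?_⟩
  linear_combination ha

theorem derivative_sub_C_mul_X_pow_succ {P q : K[X]} {a : K} {n : ℕ}
    (h : derivative P = C a * X ^ n + q) :
    derivative (P - C (a / (n + 1)) * X ^ (n + 1)) = q := by
  rw [derivative_sub, h, derivative_C_mul_X_pow, Nat.add_sub_cancel]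
  push_cast
  rw [div_mul_cancel₀ _ (Nat.cast_add_one_ne_zero n)]
  ring

theorem coeff_X_pow_mul_add_of_natDegree_lt {R : Type*} [Semiring R] {n k : ℕ} {M N : R[X]}
    (hN : N.natDegree < n + k) : (X ^ n * M + N).coeff (n + k) = M.coeff k := by
  rw [coeff_add, coeff_X_pow_mul', if_pos (by omega), Nat.add_sub_cancel_left,
    coeff_eq_zero_of_natDegree_lt hN, add_zero]

theorem eq_zero_and_coeff_eq_zero_of_X_pow_mul_add_eq_zero {R : Type*} [Semiring R]
    {n j k : ℕ} {τ : R} {M N : R[X]} (hjk : j < k) (hM : M.natDegree ≤ j)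
    (hN : N.natDegree < n + j) (h : X ^ (n + k) * C τ + (X ^ n * M + N) = 0) :
    τ = 0 ∧ M.coeff j = 0 := by
  have hτ : τ = 0 := by
    have hd : (X ^ n * M + N).natDegree < n + k + 0 := by
      have := natDegree_add_le_of_degree_le
        (natDegree_mul_le_of_le (natDegree_X_pow_le (R := R) n) hM) hN.le
      omega
    have := congrArg (coeff · (n + k + 0)) h
    rwa [coeff_X_pow_mul_add_of_natDegree_lt hd, coeff_C_zero, coeff_zero] at this
  refine ⟨hτ, ?_⟩
  rw [hτ, C_0, mul_zero, zero_add] at h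
  have := congrArg (coeff · (n + j)) h
  rwa [coeff_X_pow_mul_add_of_natDegree_lt hN, coeff_zero] at this

end Polynomial

namespace Isochronous

/- For `f = a Xᵈ + b Xˢ + ⋯`, `Q' = -c f` and `I' = X f`, these are the coefficients of `X²ᵈ⁺⁴`
and `Xᵈ⁺ˢ⁺⁴` in `X³ f Q = ω² X⁴ + I²`. -/
theorem eq_zero_of_top_coeff_relations {a b c : ℝ} {d s : ℕ} (ha : a ≠ 0) (hb : b ≠ 0)
    (hsd : s < d) (htop : a * (-(c * a) / (d + 1)) = (a / (d + 2)) ^ 2)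
    (hsub : a * (-(c * b) / (s + 1)) + -(c * a) / (d + 1) * b
      = 2 * (a / (d + 2)) * (b / (s + 2))) :
    s = 0 := by
  have h1 : (d : ℝ) + 1 ≠ 0 := by positivity
  have h2 : (d : ℝ) + 2 ≠ 0 := by positivity
  have h3 : (s : ℝ) + 1 ≠ 0 := by positivity
  have h4 : (s : ℝ) + 2 ≠ 0 := by positivity
  field_simp at htop hsub
  have hds : (d : ℝ) - s ≠ 0 := sub_ne_zero.mpr (by exact_mod_cast hsd.ne')
  have : ((d : ℝ) + 1) * (d - s) * s = 0 := by
    linear_combination (d + s + 2) * (s + 2) * htop - (d + 2) * hsub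
  simpa [h1, hds] using this

variable {ω c : ℝ} {f I g Q : ℝ[X]}

theorem coeff_zero_eq_zero_and_coeff_one_ne_zero (hω : ω ≠ 0) (hc : 0 ≤ 4 * c + 1)
    (hI0 : I.eval 0 = 0) (hI' : derivative I = X * f)
    (hg : X ^ 3 * g = C (ω ^ 2) * X ^ 4 + I ^ 2)
    (hQ : derivative Q = -(C c * f)) (hgQ : g = f * Q) :
    f.coeff 0 = 0 ∧ f.coeff 1 ≠ 0 := by
  obtain ⟨L, rfl⟩ : X ^ 2 ∣ I := by
    refine X_pow_dvd_iff.mpr fun n hn => ?_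
    interval_cases n
    · rwa [coeff_zero_eq_eval_zero]
    · rw [coeff_succ_eq_of_derivative_eq hI', coeff_X_mul_zero, zero_div]
  have hL : L.coeff 0 = f.coeff 0 / 2 := by
    rw [← coeff_X_pow_mul L 2 0, coeff_succ_eq_of_derivative_eq hI', coeff_X_mul]
    norm_num
  have hgX : g = X * (C (ω ^ 2) + L ^ 2) :=
    mul_left_cancel₀ (pow_ne_zero 3 X_ne_zero) (by rw [hg]; ring)
  have hQ1 : Q.coeff 1 = -(c * f.coeff 0) := by
    rw [coeff_succ_eq_of_derivative_eq hQ, coeff_neg, coeff_C_mul]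
    norm_num
  have h0 : f.coeff 0 * Q.coeff 0 = 0 := by
    rw [← mul_coeff_zero, ← hgQ, hgX, mul_coeff_zero, coeff_X_zero, zero_mul]
  have h1 : f.coeff 0 * Q.coeff 1 + f.coeff 1 * Q.coeff 0 = ω ^ 2 + (f.coeff 0 / 2) ^ 2 := by
    have := congrArg (coeff · 1) (hgX.symm.trans hgQ)
    simp only [coeff_X_mul, coeff_add, coeff_C_zero, sq L, mul_coeff_zero, hL] at this
    rw [sq (f.coeff 0 / 2), this, coeff_mul]
    simp [Finset.Nat.antidiagonal_succ]
  rw [hQ1] at h1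
  have hω2 : 0 < ω ^ 2 := by positivity
  have hf0 : f.coeff 0 = 0 := by
    by_contra hf0
    rw [mul_eq_zero, or_iff_right hf0] at h0
    rw [h0] at h1
    nlinarith [mul_nonneg hc (sq_nonneg (f.coeff 0))]
  refine ⟨hf0, fun hf1 => ?_⟩
  rw [hf0, hf1] at h1
  linarith

theorem natDegree_eraseLead_eq_zero (hI' : derivative I = X * f)
    (hg : X ^ 3 * g = C (ω ^ 2) * X ^ 4 + I ^ 2)
    (hQ : derivative Q = -(C c * f)) (hgQ : g = f * Q) :
    f.eraseLead.natDegree = 0 := by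
  set d := f.natDegree
  set a := f.leadingCoeff
  set p := f.eraseLead
  set s := p.natDegree
  by_contra hs
  have hp : p ≠ 0 := by rintro h; simp [s, h] at hs
  have hsd : s < d := (eraseLead_natDegree_lt_or_eraseLead_eq_zero f).resolve_right hp
  have ha : a ≠ 0 := leadingCoeff_ne_zero.mpr fun h => hp (by simp [p, h])
  have hf : f = C a * X ^ d + p := by rw [add_comm]; exact (eraseLead_add_C_mul_X_pow f).symm
  -- `α Xᵈ⁺¹` and `β Xᵈ⁺²` are the leading terms of `Q` and `I`
  set α := -(c * a) / (d + 1)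
  set β := a / ((d + 1 : ℕ) + 1)
  set Qp := Q - C α * X ^ (d + 1)
  set Ip := I - C β * X ^ (d + 1 + 1)
  have hQp : derivative Qp = -(C c * p) :=
    derivative_sub_C_mul_X_pow_succ (by rw [hQ, hf]; simp only [map_neg, map_mul]; ring)
  have hIp : derivative Ip = X * p :=
    derivative_sub_C_mul_X_pow_succ (by rw [hI', hf]; ring)
  have hQpd : Qp.natDegree ≤ s + 1 :=
    natDegree_le_of_derivative_eq hQp ((natDegree_neg _).trans_le (natDegree_C_mul_le _ _))
  have hIpd : Ip.natDegree ≤ s + 2 := natDegree_le_of_derivative_eq hIp (by compute_degree; omega)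
  set M := C a * X * Qp + C α * X ^ 2 * p - C (2 * β) * Ip
  set R := X ^ 3 * p * Qp - C (ω ^ 2) * X ^ 4 - Ip ^ 2
  have key : X ^ (d + 2 + (d + 2)) * C (a * α - β ^ 2) + (X ^ (d + 2) * M + R) = 0 := by
    have h : X ^ 3 * (f * Q) - C (ω ^ 2) * X ^ 4 - I ^ 2 = 0 := by rw [← hgQ, hg]; ring
    rw [hf, show Q = C α * X ^ (d + 1) + Qp by simp [Qp],
      show I = C β * X ^ (d + 1 + 1) + Ip by simp [Ip]] at h
    linear_combination (norm := skip) h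
    simp only [M, R, map_sub, map_mul, map_pow, map_ofNat]
    ring
  obtain ⟨htop, hsub⟩ := eq_zero_and_coeff_eq_zero_of_X_pow_mul_add_eq_zero (j := s + 2)
    (by omega) (by simp only [M]; compute_degree; omega) (by simp only [R]; compute_degree; omega)
    key
  simp only [M, coeff_sub, coeff_add, mul_assoc, coeff_C_mul, coeff_X_mul, coeff_X_pow_mul,
    coeff_succ_eq_of_derivative_eq hQp, coeff_succ_eq_of_derivative_eq hIp, coeff_neg] at hsub
  simp only [α, β] at htop hsub
  push_cast at htop hsub
  have hb : p.coeff s ≠ 0 := leadingCoeff_ne_zero.mpr hp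
  exact hs (eq_zero_of_top_coeff_relations (c := c) ha hb hsd (by linear_combination htop)
    (by linear_combination hsub))

theorem chiellini_of_eq_C_mul_X (k : ℝ) (hI0 : I.eval 0 = 0)
    (hI' : derivative I = X * (C k * X)) (hg : X ^ 3 * g = C (ω ^ 2) * X ^ 4 + I ^ 2) :
    derivative g * (C k * X) - g * derivative (C k * X) + C (-2 / 9) * (C k * X) ^ 3 = 0 := by
  have hI : I = C (k / 3) * X ^ 3 := by
    have h : derivative (I - C (k / 3) * X ^ 3) = 0 := by
      rw [derivative_sub, hI', derivative_C_mul_X_pow]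
      refine Polynomial.funext fun x => ?_
      simp
      ring
    rw [← sub_eq_zero, eq_C_of_derivative_eq_zero h, coeff_zero_eq_eval_zero]
    simp [hI0]
  have hgX : g = C (ω ^ 2) * X + C (k ^ 2 / 9) * X ^ 3 := by
    refine mul_left_cancel₀ (pow_ne_zero 3 X_ne_zero) (Polynomial.funext fun x => ?_)
    simp [hg, hI]
    ring
  rw [hgX, derivative_add, derivative_C_mul_X, derivative_C_mul_X_pow, derivative_C_mul_X]
  refine Polynomial.funext fun x => ?_
  simp
  ring

end Isochronous

/-- For a nonzero real polynomial `f` and `ω > 0`, with `I` the unique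
polynomial satisfying `I(0) = 0` and `I' = X·f` (so `I(x) = ∫₀ˣ x' f(x') dx'`), and `g`
the unique polynomial with `X³·g = ω²·X⁴ + I²` (the isochronicity condition
`g(x) = ω²x + I(x)²/x³`), there exists a real `ℓ` such that the Chiellini identity
`g'·f − g·f' + ℓ(ℓ+1)·f³ = 0` holds iff `f = k·X` for some real `k ≠ 0`. -/
theorem stmt_0 (f : ℝ[X]) (hf : f ≠ 0) (ω : ℝ) (hω : 0 < ω)
    (I g : ℝ[X]) (hI0 : I.eval 0 = 0) (hI' : derivative I = X * f)
    (hg : X ^ 3 * g = C (ω ^ 2) * X ^ 4 + I ^ 2) :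
    (∃ ℓ : ℝ,
        derivative g * f - g * derivative f + C (ℓ * (ℓ + 1)) * f ^ 3 = 0) ↔
      ∃ k : ℝ, k ≠ 0 ∧ f = C k * X := by
  constructor
  · rintro ⟨ℓ, hch⟩
    have hw : wronskian f g = f ^ 2 * -(C (ℓ * (ℓ + 1)) * f) := by
      rw [wronskian]
      linear_combination hch
    obtain ⟨Q, hQ, hgQ⟩ := exists_eq_mul_of_wronskian_eq hf hw
    obtain ⟨hf0, hf1⟩ := Isochronous.coeff_zero_eq_zero_and_coeff_one_ne_zero hω.ne'
      (by nlinarith [sq_nonneg (2 * ℓ + 1)]) hI0 hI' hg hQ hgQ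
    have hd : f.natDegree = 1 := by
      by_contra hd
      have := Isochronous.natDegree_eraseLead_eq_zero hI' hg hQ hgQ
      exact hf1 (by rw [← eraseLead_coeff_of_ne 1 (Ne.symm hd),
        coeff_eq_zero_of_natDegree_lt (by omega)])
    have hfX := eq_X_add_C_of_natDegree_le_one hd.le
    rw [hf0, C_0, add_zero] at hfX
    exact ⟨f.coeff 1, hf1, hfX⟩
  · rintro ⟨k, -, rfl⟩
    refine ⟨-1 / 3, ?_⟩
    convert Isochronous.chiellini_of_eq_C_mul_X k hI0 hI' hg using 4
    norm_num
end

section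
/- Let f be a real polynomial of degree at least 2 and let ω > 0. Then for every real number c, the Chiellini identity fails: g_f′·f − g_f·f′ + c·f³ ≠ 0 as polynomials. -/
/-!
Write `I = X²J`, so that `f = 2J + XJ'` and `g = X(ω² + J²)`, and let `n = deg J = deg f`.
The coefficient of `X^{3n}` in the identity forces `c (n+2)² = -(n+1)`; its value at `0` then
forces `J(0) = 0`, so `J = X K` with `deg K = n - 1`.

Over `ℂ` let `ε = ±iω`. At a root `r` of `J - ε` put `d = r J'(r)`, so that `f(r) = d + 2ε`;
the identity at `r` becomes `(d + 2ε) (c (d + 2ε)² + 2εd) = 0`. Hence `d ≠ 0` (the roots of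
`J - ε` are simple) and `d ∈ {-2ε, 2ε/(n+1), 2ε(n+1)}`. On the other hand `K` and `J - ε`
have the same leading coefficient, so the residues of `K / (J - ε)` sum to `1`:
`∑ ε / d = ∑ K(r) / J'(r) = 1` over the roots of `J - ε`. With the three possible values of
`d` this forces all but at most one of the `n` roots of `J - ε` to be roots of `f`.
Together with the root `0`, `f` then has at least `2(n - 1) + 1` distinct roots, impossible
for `n ≥ 2`.
-/

open Polynomial Finset

theorem Finset.card_le_card_filter_eq_zero_add_one {ι : Type*} (s : Finset ι) (m : ι → ℕ)
    (hm : ∀ i ∈ s, m i ≤ 1 ∨ m i = #s + 1) (hsum : ∑ i ∈ s, m i = #s + 1) :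
    #s ≤ #{i ∈ s | m i = 0} + 1 := by
  classical
  by_cases hbig : ∃ i ∈ s, m i = #s + 1
  · obtain ⟨i, hi, hmi⟩ := hbig
    have hrest : ∑ j ∈ s.erase i, m j = 0 := by
      have := add_sum_erase s m hi
      omega
    have hsub : s.erase i ⊆ {j ∈ s | m j = 0} := fun j hj =>
      mem_filter.mpr ⟨mem_of_mem_erase hj, sum_eq_zero_iff.mp hrest j hj⟩
    have := card_le_card hsub
    rw [card_erase_of_mem hi] at this
    omega
  · push Not at hbig
    have : ∑ i ∈ s, m i ≤ ∑ _i ∈ s, 1 :=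
      sum_le_sum fun i hi => (hm i hi).resolve_right (hbig i hi)
    simp only [sum_const, smul_eq_mul, mul_one] at this
    omega

theorem sum_roots_eval_div_eval_derivative {F : Type*} [Field F] [DecidableEq F] {p q : F[X]}
    (hnodup : p.roots.Nodup) (hcard : Multiset.card p.roots = p.natDegree)
    (hq : q.degree < p.natDegree) :
    ∑ r ∈ p.roots.toFinset, q.eval r / (derivative p).eval r
      = q.coeff (p.natDegree - 1) / p.leadingCoeff := by
  set s := p.roots.toFinset
  have hs : #s = p.natDegree := by rw [Multiset.toFinset_card_of_nodup hnodup, hcard]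
  have hp : p = C p.leadingCoeff * Lagrange.nodal s id := by
    conv_lhs => rw [← C_leadingCoeff_mul_prod_multiset_X_sub_C hcard]
    rw [Lagrange.nodal_eq, prod_eq_multiset_prod, Multiset.toFinset_val, hnodup.dedup]
    rfl
  have hderiv (r : F) (hr : r ∈ s) :
      (derivative p).eval r = p.leadingCoeff * ∏ j ∈ s.erase r, (r - j) := by
    have := Lagrange.eval_nodal_derivative_eval_node_eq (v := id) hr
    rw [Lagrange.eval_nodal] at this
    conv_lhs => rw [hp, derivative_C_mul, eval_C_mul]
    exact congrArg _ this
  rw [← hs, Lagrange.coeff_eq_sum (v := id) (Set.injOn_id _) (hs ▸ hq), sum_div]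
  refine sum_congr rfl fun r hr => ?_
  rw [hderiv r hr, div_div, mul_comm]
  rfl

section
variable {R : Type*} [CommRing R]

theorem exists_eq_X_sq_mul_of_derivative_eq_X_mul [IsDomain R] {I f : R[X]}
    (hI0 : I.eval 0 = 0) (hI' : derivative I = X * f) :
    ∃ J, I = X ^ 2 * J ∧ f = 2 * J + X * derivative J := by
  have hI1 : I.coeff 1 = 0 := by
    have := coeff_derivative I 0
    rw [hI', mul_coeff_zero, coeff_X_zero, zero_mul] at this
    simpa using this.symm
  obtain ⟨J, rfl⟩ : X ^ 2 ∣ I := by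
    rw [X_pow_dvd_iff]
    intro d hd
    interval_cases d
    · rwa [coeff_zero_eq_eval_zero]
    · exact hI1
  refine ⟨J, rfl, mul_left_cancel₀ X_ne_zero ?_⟩
  rw [← hI', derivative_mul, derivative_X_pow]
  simp only [Nat.cast_ofNat, Nat.reduceSub, pow_one, map_ofNat]
  ring

theorem coeff_two_mul_add_X_mul_derivative (J : R[X]) (k : ℕ) :
    (2 * J + X * derivative J).coeff k = (k + 2) * J.coeff k := by
  cases k with
  | zero => simp
  | succ k =>
    simp only [coeff_add, coeff_X_mul, coeff_derivative, coeff_ofNat_mul]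
    push_cast
    ring

theorem natDegree_two_mul_add_X_mul_derivative [IsDomain R] [CharZero R] (J : R[X]) :
    (2 * J + X * derivative J).natDegree = J.natDegree := by
  have h2 (k : ℕ) : (k + 2 : R) ≠ 0 := by exact_mod_cast (k + 1).succ_ne_zero
  refine le_antisymm (natDegree_le_iff_coeff_eq_zero.mpr fun k hk => ?_) ?_
  · rw [coeff_two_mul_add_X_mul_derivative, coeff_eq_zero_of_natDegree_lt hk, mul_zero]
  · rcases eq_or_ne J 0 with rfl | hJ
    · exact Nat.zero_le _
    · refine le_natDegree_of_ne_zero ?_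
      rw [coeff_two_mul_add_X_mul_derivative]
      exact mul_ne_zero (h2 _) (leadingCoeff_ne_zero.mpr hJ)

theorem coeff_derivative_mul_sub_mul_derivative {f g : R[X]} {m n : ℕ}
    (hg : g.natDegree ≤ m + 1) (hf : f.natDegree ≤ n + 1) :
    (derivative g * f - g * derivative f).coeff (m + n + 1)
      = (m - n : R) * g.coeff (m + 1) * f.coeff (n + 1) := by
  have hg' : (derivative g).natDegree ≤ m := (natDegree_derivative_le g).trans (by omega)
  have hf' : (derivative f).natDegree ≤ n := (natDegree_derivative_le f).trans (by omega)
  rw [coeff_sub, add_assoc, coeff_mul_add_eq_of_natDegree_le hg' hf,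
    show m + (n + 1) = m + 1 + n by ring, coeff_mul_add_eq_of_natDegree_le hg hf',
    coeff_derivative, coeff_derivative]
  ring

end

section Field

variable {K : Type*} [Field K]

theorem sum_roots_sub_C_div_mul_eval_derivative [IsAlgClosed K] [DecidableEq K] {J : K[X]} {ε : K}
    (hJ0 : J.eval 0 = 0) (hε : ε ≠ 0) (hJ : 0 < J.natDegree) (hnodup : (J - C ε).roots.Nodup) :
    ∑ r ∈ (J - C ε).roots.toFinset, ε / (r * (derivative J).eval r) = 1 := by
  obtain ⟨q, rfl⟩ : X ∣ J := X_dvd_iff.mpr (by rwa [coeff_zero_eq_eval_zero])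
  have hq0 : q ≠ 0 := by rintro rfl; simp at hJ
  have hdeg : (X * q - C ε).natDegree = q.natDegree + 1 := by
    rw [natDegree_sub_C, natDegree_X_mul hq0]
  have hlc : (X * q - C ε).leadingCoeff = q.leadingCoeff := by
    rw [leadingCoeff, hdeg, coeff_sub, coeff_X_mul, coeff_C, if_neg (by omega), sub_zero,
      leadingCoeff]
  have hres := sum_roots_eval_div_eval_derivative hnodup IsAlgClosed.card_roots_eq_natDegree
    (q := q) (hdeg ▸ degree_le_natDegree.trans_lt (by exact_mod_cast Nat.lt_succ_self _))
  rw [hdeg, Nat.add_sub_cancel, hlc, ← leadingCoeff,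
    div_self (leadingCoeff_ne_zero.mpr hq0)] at hres
  rw [← hres]
  refine sum_congr rfl fun r hr => ?_
  have hr' : r * q.eval r = ε := by
    have := (mem_roots'.mp (Multiset.mem_toFinset.mp hr)).2
    simpa [sub_eq_zero] using this
  have hr0 : r ≠ 0 := by
    rintro rfl
    exact hε (by simpa using hr'.symm)
  rw [derivative_sub, derivative_C, sub_zero, ← hr', mul_div_mul_left _ _ hr0]

def ChielliniRel (c ε d : K) : Prop :=
  (d + 2 * ε) * (c * (d + 2 * ε) ^ 2 + 2 * ε * d) = 0

theorem ChielliniRel.exists_nat_mul_eq {N : ℕ} {c ε d : K} (h : ChielliniRel c ε d)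
    (hc : c * (N + 2) ^ 2 = -(N + 1)) :
    ∃ m : ℕ, (m ≤ 1 ∨ m = N + 1) ∧ (m : K) * (N + 2) * d = (N + 1) * (d + 2 * ε) := by
  rcases mul_eq_zero.mp h with h0 | hq
  · exact ⟨0, by simp, by simp [h0]⟩
  · have : ((N + 1) * d - 2 * ε) * (d - 2 * ε * (N + 1)) = 0 := by
      linear_combination (-((N : K) + 2) ^ 2) * hq + (d + 2 * ε) ^ 2 * hc
    rcases mul_eq_zero.mp this with h1 | h1
    · exact ⟨N + 1, Or.inr rfl, by push_cast; linear_combination ((N : K) + 1) * h1⟩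
    · exact ⟨1, Or.inl le_rfl, by push_cast; linear_combination h1⟩

theorem ChielliniRel.ne_zero [CharZero K] {c ε d : K} (h : ChielliniRel c ε d) (hc : c ≠ 0)
    (hε : ε ≠ 0) : d ≠ 0 := by
  rintro rfl
  unfold ChielliniRel at h
  have : (8 : K) * c * ε ^ 3 = 0 := by linear_combination h
  simp [hc, hε] at this

theorem card_sub_one_le_card_filter_of_chielliniRel [CharZero K] [DecidableEq K] {ι : Type*}
    (S : Finset ι) (d : ι → K) {c ε : K} (hc : c * (#S + 2) ^ 2 = -(#S + 1))
    (hrel : ∀ i ∈ S, ChielliniRel c ε (d i)) (hsum : ∑ i ∈ S, ε / d i = 1) :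
    #S - 1 ≤ #{i ∈ S | d i + 2 * ε = 0} := by
  have hε : ε ≠ 0 := by
    rintro rfl
    simp at hsum
  have hc0 : c ≠ 0 := by
    rintro rfl
    exact Nat.cast_add_one_ne_zero #S (by linear_combination hc)
  have hd i (hi : i ∈ S) : d i ≠ 0 := (hrel i hi).ne_zero hc0 hε
  choose! m hm hmd using fun i (hi : i ∈ S) => (hrel i hi).exists_nat_mul_eq hc
  have hN2 : (#S + 2 : K) ≠ 0 := by exact_mod_cast (#S + 1).succ_ne_zero
  have hmsum : ∑ i ∈ S, m i = #S + 1 := by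
    have : (∑ i ∈ S, m i : K) * (#S + 2) = (#S + 1) * (#S + 2) := by
      calc (∑ i ∈ S, m i : K) * (#S + 2) = ∑ i ∈ S, (#S + 1) * (1 + 2 * (ε / d i)) := by
            rw [sum_mul]
            refine sum_congr rfl fun i hi => ?_
            field_simp [hd i hi]
            linear_combination hmd i hi
        _ = (#S + 1) * (#S + 2) := by
            rw [← mul_sum, sum_add_distrib, ← mul_sum, hsum]
            simp
    exact_mod_cast mul_right_cancel₀ hN2 this
  have hsub : {i ∈ S | m i = 0} ⊆ {i ∈ S | d i + 2 * ε = 0} := by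
    intro i hi
    rw [mem_filter] at hi ⊢
    have := hmd i hi.1
    rw [hi.2, Nat.cast_zero, zero_mul, zero_mul, eq_comm] at this
    exact ⟨hi.1, (mul_eq_zero.mp this).resolve_left (Nat.cast_add_one_ne_zero _)⟩
  have := card_le_card_filter_eq_zero_add_one S m hm hmsum
  have := card_le_card hsub
  omega

end Field

section Chiellini

variable {K : Type*} [Field K] {J f g : K[X]} {a c : K}
  (hf : f = 2 * J + X * derivative J) (hg : g = X * (C a + J ^ 2))
  (hE : derivative g * f - g * derivative f + C c * f ^ 3 = 0)
include hf hg hE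

theorem chiellini_const_mul_sq [CharZero K] (hJ : 0 < J.natDegree) :
    c * (J.natDegree + 2) ^ 2 = -(J.natDegree + 1) := by
  set n := J.natDegree
  obtain ⟨k, hk⟩ : ∃ k, n = k + 1 := ⟨n - 1, by omega⟩
  set b := J.coeff n
  have hb : b ≠ 0 := leadingCoeff_ne_zero.mpr (ne_zero_of_natDegree_gt hJ)
  have hfn : f.natDegree ≤ n := (hf ▸ natDegree_two_mul_add_X_mul_derivative J).le
  have hfb : f.coeff n = (n + 2) * b := hf ▸ coeff_two_mul_add_X_mul_derivative J n
  have hgn : g.natDegree ≤ 2 * n + 1 := by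
    have hJ2 : (C a + J ^ 2).natDegree ≤ 2 * n :=
      (natDegree_add_le _ _).trans (max_le (by simp) natDegree_pow_le)
    rw [hg]
    exact (natDegree_mul_le.trans (add_le_add natDegree_X_le hJ2)).trans (by omega)
  have hgb : g.coeff (2 * n + 1) = b ^ 2 := by
    rw [hg, coeff_X_mul, coeff_add, coeff_C, if_neg (by omega), zero_add,
      coeff_pow_of_natDegree_le le_rfl]
  have h3n : (derivative g * f - g * derivative f + C c * f ^ 3).coeff (3 * n) = 0 := by
    rw [hE, coeff_zero]
  rw [coeff_add, coeff_C_mul] at h3n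
  rw [show 3 * n = 2 * n + k + 1 by omega, coeff_derivative_mul_sub_mul_derivative hgn (hk ▸ hfn),
    ← hk, hgb, show 2 * n + k + 1 = 3 * n by omega, coeff_pow_of_natDegree_le hfn, hfb] at h3n
  have h2 : ((n : K) + 2) * b ^ 3 ≠ 0 :=
    mul_ne_zero (by exact_mod_cast (n + 1).succ_ne_zero) (pow_ne_zero 3 hb)
  refine (mul_right_inj' h2).mp ?_
  rw [hk] at h3n ⊢
  push_cast at h3n ⊢
  linear_combination h3n

theorem eval_zero_eq_zero_of_chiellini [LinearOrder K] [IsStrictOrderedRing K] (ha : 0 < a)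
    (hc : 0 ≤ 1 + 4 * c) : J.eval 0 = 0 := by
  have h0 : 2 * J.eval 0 * (a + (1 + 4 * c) * J.eval 0 ^ 2) = 0 := by
    have := congrArg (eval 0) hE
    simp only [hf, hg, derivative_mul, derivative_X, derivative_add, derivative_C, eval_add,
      eval_sub, eval_mul, eval_pow, eval_X, eval_C, eval_one, eval_ofNat, eval_zero] at this
    linear_combination this
  have hpos : 0 < a + (1 + 4 * c) * J.eval 0 ^ 2 := by positivity
  simpa [hpos.ne'] using h0

theorem chielliniRel_of_eval_eq {ε r : K} (ha : a = -ε ^ 2) (hr : J.eval r = ε) :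
    ChielliniRel c ε (r * (derivative J).eval r) := by
  have := congrArg (eval r) hE
  simp only [hf, hg, derivative_mul, derivative_X, derivative_add, derivative_C, derivative_pow,
    derivative_ofNat, eval_add, eval_sub, eval_mul, eval_pow, eval_X, eval_C, eval_one, eval_ofNat,
    eval_zero, hr] at this
  subst ha
  unfold ChielliniRel
  linear_combination this

theorem natDegree_sub_one_le_card_filter_roots [IsAlgClosed K] [CharZero K] [DecidableEq K]
    {ε : K} (hJ0 : J.eval 0 = 0) (ha : a = -ε ^ 2) (hε : ε ≠ 0) :
    J.natDegree - 1 ≤ #{r ∈ f.roots.toFinset | J.eval r = ε} := by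
  rcases Nat.eq_zero_or_pos J.natDegree with hJ | hJ
  · simp [hJ]
  have hp0 : J - C ε ≠ 0 := fun h => hε (by simpa [hJ0] using congrArg (eval 0) h)
  have hmem (r : K) : r ∈ (J - C ε).roots.toFinset ↔ J.eval r = ε := by
    simp [mem_roots hp0, sub_eq_zero]
  have hrel (r : K) (hr : J.eval r = ε) := chielliniRel_of_eval_eq hf hg hE ha hr
  have hc := chiellini_const_mul_sq hf hg hE hJ
  have hnodup : (J - C ε).roots.Nodup := by
    refine Multiset.nodup_iff_count_le_one.mpr fun r => ?_
    rw [count_roots]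
    by_contra! h
    obtain ⟨hr, hr'⟩ := (one_lt_rootMultiplicity_iff_isRoot hp0).mp h
    simp only [IsRoot, eval_sub, eval_C, sub_eq_zero, derivative_sub, derivative_C,
      sub_zero] at hr hr'
    refine (hrel r hr).ne_zero ?_ hε (by rw [hr', mul_zero])
    rintro rfl
    exact Nat.cast_add_one_ne_zero J.natDegree (by linear_combination hc)
  have hS : #(J - C ε).roots.toFinset = J.natDegree := by
    rw [Multiset.toFinset_card_of_nodup hnodup, IsAlgClosed.card_roots_eq_natDegree,
      natDegree_sub_C]
  have hcount := card_sub_one_le_card_filter_of_chielliniRel _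
    (fun r => r * (derivative J).eval r) (hS ▸ hc) (fun r hr => hrel r ((hmem r).mp hr))
    (sum_roots_sub_C_div_mul_eval_derivative hJ0 hε hJ hnodup)
  have hf0 : f ≠ 0 :=
    ne_zero_of_natDegree_gt (n := 0) (by rwa [hf, natDegree_two_mul_add_X_mul_derivative])
  refine (hS ▸ hcount).trans (card_le_card fun r hr => ?_)
  rw [mem_filter] at hr ⊢
  have hJr := (hmem r).mp hr.1
  refine ⟨Multiset.mem_toFinset.mpr ((mem_roots hf0).mpr ?_), hJr⟩
  rw [IsRoot, hf]
  simp only [eval_add, eval_mul, eval_ofNat, eval_X, hJr]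
  linear_combination hr.2

theorem natDegree_le_one_of_chiellini [IsAlgClosed K] [CharZero K] (hJ0 : J.eval 0 = 0)
    (ha : a ≠ 0) : J.natDegree ≤ 1 := by
  classical
  obtain ⟨ε, hε⟩ := IsAlgClosed.exists_eq_mul_self (-a)
  have hε0 : ε ≠ 0 := by
    rintro rfl
    exact ha (by linear_combination -hε)
  have hplus := natDegree_sub_one_le_card_filter_roots hf hg hE hJ0 (ε := ε)
    (by linear_combination -hε) hε0
  have hminus := natDegree_sub_one_le_card_filter_roots hf hg hE hJ0 (ε := -ε)
    (by linear_combination -hε) (neg_ne_zero.mpr hε0)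
  by_contra! hJ
  have hdeg : f.natDegree = J.natDegree := hf ▸ natDegree_two_mul_add_X_mul_derivative J
  have hf0 : f ≠ 0 := ne_zero_of_natDegree_gt (n := 0) (by omega)
  set A := {r ∈ f.roots.toFinset | J.eval r = ε}
  set B := {r ∈ f.roots.toFinset | J.eval r = -ε}
  have hdisj : Disjoint A B := disjoint_filter.mpr fun r _ h1 h2 =>
    hε0 (by linear_combination (h1.symm.trans h2) / 2)
  have h0 : (0 : K) ∉ A ∪ B := by
    simp [A, B, hJ0, hε0, eq_comm (a := (0 : K))]
  have hsub : insert 0 (A ∪ B) ⊆ f.roots.toFinset := by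
    refine insert_subset ?_ (union_subset (filter_subset _ _) (filter_subset _ _))
    rw [Multiset.mem_toFinset, mem_roots hf0, IsRoot, hf]
    simp [hJ0]
  have hcard := card_le_card hsub
  rw [card_insert_of_notMem h0, card_union_of_disjoint hdisj] at hcard
  have hroots := (Multiset.toFinset_card_le f.roots).trans (card_roots' f)
  omega

end Chiellini

/-- If `f` is a real polynomial of degree at least 2 and `ω > 0`, with `I`
the antiderivative of `X·f` vanishing at `0` and `g` the polynomial with
`X³·g = ω²·X⁴ + I²`, then for every real `c` the Chiellini identity fails:
`g'·f − g·f' + c·f³ ≠ 0`. -/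
theorem stmt_1 (f : ℝ[X]) (hf : 2 ≤ f.natDegree) (ω : ℝ) (hω : 0 < ω)
    (I g : ℝ[X]) (hI0 : I.eval 0 = 0) (hI' : derivative I = X * f)
    (hg : X ^ 3 * g = C (ω ^ 2) * X ^ 4 + I ^ 2) :
    ∀ c : ℝ, derivative g * f - g * derivative f + C c * f ^ 3 ≠ 0 := by
  intro c hE
  obtain ⟨J, rfl, hfJ⟩ := exists_eq_X_sq_mul_of_derivative_eq_X_mul hI0 hI'
  have hgJ : g = X * (C (ω ^ 2) + J ^ 2) :=
    mul_left_cancel₀ (pow_ne_zero 3 X_ne_zero) (by rw [hg]; ring)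
  have hdeg : f.natDegree = J.natDegree := hfJ ▸ natDegree_two_mul_add_X_mul_derivative J
  have hc := chiellini_const_mul_sq hfJ hgJ hE (by omega)
  have h4c : 0 ≤ 1 + 4 * c := by nlinarith [sq_nonneg (J.natDegree : ℝ)]
  have hJ0 := eval_zero_eq_zero_of_chiellini hfJ hgJ hE (by positivity) h4c
  set φ := algebraMap ℝ ℂ
  have hfC : f.map φ = 2 * J.map φ + X * derivative (J.map φ) := by
    simp [hfJ, derivative_map]
  have hgC : g.map φ = X * (C (φ (ω ^ 2)) + J.map φ ^ 2) := by
    simp [hgJ]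
  have hEC : derivative (g.map φ) * f.map φ - g.map φ * derivative (f.map φ)
      + C (φ c) * f.map φ ^ 3 = 0 := by
    simpa [derivative_map] using congrArg (map φ) hE
  have hJC := natDegree_le_one_of_chiellini hfC hgC hEC (by simp [hJ0])
    (by simp [φ, hω.ne'])
  rw [natDegree_map] at hJC
  omega
end

section
/- Let ω > 0, k ≠ 0 and b be real numbers, and let f = k·X + b. If there is a real number c such that the Chiellini identity g_f′·f − g_f·f′ + c·f³ = 0 holds as polynomials, then c = −2/9 and b·(b²/36 + ω²) = 0; in particular (since ω > 0) b = 0. -/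
/-!
For `f = k X + b` everything is explicit: `I_f = (k/3) X³ + (b/2) X²`, hence
`g_f = (k²/9) X³ + (kb/3) X² + (ω² + b²/4) X`, and the Chiellini expression is a cubic whose
leading coefficient is `k³ (2/9 + c)` and whose constant term is `b (ω² + b²/4 + c b²)`.
The first forces `c = -2/9`, and then the second reads `b (b²/36 + ω²) = 0`.
-/

open Polynomial

namespace Polynomial

theorem eq_of_derivative_eq_of_eval_zero_eq {R : Type*} [Ring R] [IsAddTorsionFree R]
    {p q : R[X]} (hd : derivative p = derivative q) (h0 : p.eval 0 = q.eval 0) : p = q := by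
  have hconst : p - q = C ((p - q).coeff 0) :=
    eq_C_of_derivative_eq_zero (by rw [derivative_sub, hd, sub_self])
  rw [coeff_zero_eq_eval_zero, eval_sub, h0, sub_self, map_zero] at hconst
  exact sub_eq_zero.mp hconst

end Polynomial

section Chiellini

variable (ω k b : ℝ)

theorem derivative_cubic_eq_X_mul_linear :
    derivative (C (k / 3) * X ^ 3 + C (b / 2) * X ^ 2) = X * (C k * X + C b) := by
  apply Polynomial.funext
  intro x
  simp only [derivative_add, derivative_C_mul_X_pow, eval_add, eval_mul, eval_C, eval_X,
    eval_pow]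
  push_cast
  ring

theorem X_pow_three_mul_cubic_eq :
    X ^ 3 * (C (k ^ 2 / 9) * X ^ 3 + C (k * b / 3) * X ^ 2 + C (ω ^ 2 + b ^ 2 / 4) * X) =
      C (ω ^ 2) * X ^ 4 + (C (k / 3) * X ^ 3 + C (b / 2) * X ^ 2) ^ 2 := by
  apply Polynomial.funext
  intro x
  simp only [eval_add, eval_mul, eval_C, eval_X, eval_pow]
  ring

theorem chiellini_expr_linear_eq (c : ℝ) :
    let f := C k * X + C b
    let g := C (k ^ 2 / 9) * X ^ 3 + C (k * b / 3) * X ^ 2 + C (ω ^ 2 + b ^ 2 / 4) * X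
    derivative g * f - g * derivative f + C c * f ^ 3 =
      C (k ^ 3 * (2 / 9 + c)) * X ^ 3 + C (2 * k ^ 2 * b * (1 / 3 + 3 / 2 * c)) * X ^ 2 +
        C (k * b ^ 2 * (2 / 3 + 3 * c)) * X + C (b * (ω ^ 2 + b ^ 2 / 4 + c * b ^ 2)) := by
  intro f g
  apply Polynomial.funext
  intro x
  simp only [f, g, derivative_add, derivative_C_mul_X_pow, derivative_C_mul_X, derivative_C,
    eval_add, eval_sub, eval_mul, eval_C, eval_X, eval_pow, eval_zero]
  push_cast
  ring

end Chiellini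

/-- Let `ω > 0`, `k ≠ 0`, `b ∈ ℝ` and `f = k·X + b`. With `I` the
antiderivative of `X·f` vanishing at `0` and `g` the polynomial with
`X³·g = ω²·X⁴ + I²`, if some real `c` satisfies the Chiellini identity
`g'·f − g·f' + c·f³ = 0`, then `c = −2/9` and `b·(b²/36 + ω²) = 0`; in particular
(since `ω > 0`) one has `b = 0`. -/
theorem stmt_2 (ω k b : ℝ) (hω : 0 < ω) (hk : k ≠ 0)
    (f I g : ℝ[X]) (hfdef : f = C k * X + C b)
    (hI0 : I.eval 0 = 0) (hI' : derivative I = X * f)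
    (hg : X ^ 3 * g = C (ω ^ 2) * X ^ 4 + I ^ 2)
    (c : ℝ)
    (hCh : derivative g * f - g * derivative f + C c * f ^ 3 = 0) :
    c = -2 / 9 ∧ b * (b ^ 2 / 36 + ω ^ 2) = 0 ∧ b = 0 := by
  subst hfdef
  have hI : I = C (k / 3) * X ^ 3 + C (b / 2) * X ^ 2 :=
    eq_of_derivative_eq_of_eval_zero_eq (hI'.trans (derivative_cubic_eq_X_mul_linear k b).symm)
      (by simp [hI0])
  subst hI
  have hg : g = C (k ^ 2 / 9) * X ^ 3 + C (k * b / 3) * X ^ 2 + C (ω ^ 2 + b ^ 2 / 4) * X :=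
    mul_left_cancel₀ (pow_ne_zero 3 X_ne_zero) (hg.trans (X_pow_three_mul_cubic_eq ω k b).symm)
  subst hg
  rw [chiellini_expr_linear_eq] at hCh
  have hlead : k ^ 3 * (2 / 9 + c) = 0 := by
    simpa only [coeff_add, coeff_C_mul_X_pow, coeff_C_mul_X, coeff_C, coeff_zero,
      Nat.reduceEqDiff, ↓reduceIte, add_zero, zero_add] using congrArg (coeff · 3) hCh
  have hconst : b * (ω ^ 2 + b ^ 2 / 4 + c * b ^ 2) = 0 := by
    simpa only [coeff_add, coeff_C_mul_X_pow, coeff_C_mul_X, coeff_C, coeff_zero,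
      Nat.reduceEqDiff, ↓reduceIte, add_zero, zero_add] using congrArg (coeff · 0) hCh
  have hc : c = -2 / 9 := by
    linear_combination (mul_eq_zero.mp hlead).resolve_left (pow_ne_zero 3 hk)
  have hb : b * (b ^ 2 / 36 + ω ^ 2) = 0 := by
    rw [hc] at hconst
    linear_combination hconst
  exact ⟨hc, hb, (mul_eq_zero.mp hb).resolve_right (by positivity)⟩
end

section
/- Let ω > 0 and let f be the nonzero constant polynomial f = a with a ≠ 0. Then: (i) for c ∈ ℝ, the Chiellini identity g_f′·f − g_f·f′ + c·f³ = 0 holds if and only if c = −(ω² + a²/4)/a²; and (ii) this value satisfies c < −1/4, so there is no real number ℓ with ℓ(ℓ+1) = c. Consequently no real ℓ satisfies the Chiellini identity with c = ℓ(ℓ+1) when f is a nonzero constant. -/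
/-!
For `f = a` the conditions force `I = (a/2) X²` and hence `g = (ω² + a²/4) X`, so the Chiellini
expression is the constant `a (ω² + a²/4 + c a²)`, which vanishes exactly for
`c = -(ω² + a²/4)/a²`. This value is `-1/4 - ω²/a² < -1/4`, whereas `ℓ(ℓ+1) = (ℓ + 1/2)² - 1/4`
is never below `-1/4`.
-/

open Polynomial

namespace Polynomial

theorem eq_C_half_mul_X_sq_of_derivative_eq {K : Type*} [Field K] [CharZero K] {I : K[X]}
    {a : K} (hI0 : I.eval 0 = 0) (hI' : derivative I = X * C a) :
    I = C (a / 2) * X ^ 2 := by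
  have hderiv : derivative (I - C (a / 2) * X ^ 2) = 0 := by
    rw [derivative_sub, hI', derivative_C_mul_X_pow, Nat.cast_ofNat, div_mul_cancel₀ a two_ne_zero]
    rw [Nat.add_one_sub_one, pow_one, mul_comm, sub_self]
  have hconst := eq_C_of_derivative_eq_zero hderiv
  rw [coeff_zero_eq_eval_zero] at hconst
  simpa [hI0, sub_eq_zero] using hconst

theorem eq_C_mul_X_of_X_pow_three_mul_eq {R : Type*} [CommSemiring R] {g : R[X]} {w b : R}
    (hg : X ^ 3 * g = C w * X ^ 4 + (C b * X ^ 2) ^ 2) :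
    g = C (w + b ^ 2) * X :=
  (isRegular_X_pow 3).left <| by
    simp only [hg, C_add, C_pow]
    ring

theorem derivative_C_mul_X_mul_C_sub_add {R : Type*} [CommRing R] (k a c : R) :
    derivative (C k * X) * C a - C k * X * derivative (C a) + C c * C a ^ 3 =
      C (a * (k + c * a ^ 2)) := by
  simp only [derivative_C_mul_X, derivative_C, C_mul, C_add, C_pow]
  ring

theorem chiellini_C_iff {K : Type*} [Field K] {k a : K} (ha : a ≠ 0) (c : K) :
    derivative (C k * X) * C a - C k * X * derivative (C a) + C c * C a ^ 3 = 0 ↔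
      c = -k / a ^ 2 := by
  rw [derivative_C_mul_X_mul_C_sub_add, C_eq_zero, mul_eq_zero, or_iff_right ha,
    eq_div_iff (pow_ne_zero 2 ha)]
  constructor <;> intro h <;> linear_combination h

end Polynomial

theorem neg_quarter_le_mul_add_one {K : Type*} [Field K] [LinearOrder K] [IsStrictOrderedRing K]
    (ℓ : K) : -(1 / 4) ≤ ℓ * (ℓ + 1) := by
  nlinarith [sq_nonneg (ℓ + 1 / 2)]

theorem neg_add_quarter_div_sq_lt {K : Type*} [Field K] [LinearOrder K] [IsStrictOrderedRing K]
    {ω a : K} (hω : ω ≠ 0) (ha : a ≠ 0) : -(ω ^ 2 + a ^ 2 / 4) / a ^ 2 < -(1 / 4) := by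
  have hsplit : -(ω ^ 2 + a ^ 2 / 4) / a ^ 2 = -(1 / 4) - ω ^ 2 / a ^ 2 := by
    field_simp
    ring
  rw [hsplit]
  have : 0 < ω ^ 2 / a ^ 2 := by positivity
  linarith

/-- Let `ω > 0` and `f = C a` a nonzero constant polynomial, with `I` the
antiderivative of `X·f` vanishing at `0` and `g` the polynomial with
`X³·g = ω²·X⁴ + I²`. Then (i) for `c ∈ ℝ` the Chiellini identity
`g'·f − g·f' + c·f³ = 0` holds iff `c = −(ω² + a²/4)/a²`; (ii) this value is `< −1/4`,
so no real `ℓ` has `ℓ(ℓ+1) = c`; consequently no real `ℓ` satisfies the Chiellini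
identity with `c = ℓ(ℓ+1)`. -/
theorem stmt_3 (ω a : ℝ) (hω : 0 < ω) (ha : a ≠ 0)
    (f I g : ℝ[X]) (hfdef : f = C a)
    (hI0 : I.eval 0 = 0) (hI' : derivative I = X * f)
    (hg : X ^ 3 * g = C (ω ^ 2) * X ^ 4 + I ^ 2) :
    (∀ c : ℝ,
        (derivative g * f - g * derivative f + C c * f ^ 3 = 0) ↔
          c = -(ω ^ 2 + a ^ 2 / 4) / a ^ 2) ∧
      -(ω ^ 2 + a ^ 2 / 4) / a ^ 2 < -(1 / 4) ∧
      (¬∃ ℓ : ℝ, ℓ * (ℓ + 1) = -(ω ^ 2 + a ^ 2 / 4) / a ^ 2) ∧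
      ¬∃ ℓ : ℝ,
          derivative g * f - g * derivative f + C (ℓ * (ℓ + 1)) * f ^ 3 = 0 := by
  subst hfdef
  have hI : I = C (a / 2) * X ^ 2 := eq_C_half_mul_X_sq_of_derivative_eq hI0 hI'
  rw [hI] at hg
  have hgX : g = C (ω ^ 2 + (a / 2) ^ 2) * X := eq_C_mul_X_of_X_pow_three_mul_eq hg
  rw [div_pow, show (2 : ℝ) ^ 2 = 4 by norm_num] at hgX
  subst hgX
  have hiff := chiellini_C_iff (k := ω ^ 2 + a ^ 2 / 4) ha
  have hlt := neg_add_quarter_div_sq_lt hω.ne' ha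
  have hnot : ¬∃ ℓ : ℝ, ℓ * (ℓ + 1) = -(ω ^ 2 + a ^ 2 / 4) / a ^ 2 := fun ⟨ℓ, hℓ⟩ =>
    (neg_quarter_le_mul_add_one ℓ).not_gt (hℓ ▸ hlt)
  exact ⟨hiff, hlt, hnot, fun ⟨ℓ, hℓ⟩ => hnot ⟨ℓ, (hiff _).mp hℓ⟩⟩
end

section
/- Let ω > 0 and α > 0. For n ∈ ℕ let φ_n(ξ) = N_n · ξ^{α+1/2} · exp(−ωξ²/16) · L_n^α(ωξ²/8) with N_n = √(2(ω/8)^{α+1}·n!/Γ(n+α+1)). Then the first moment of the probability density equals ∫₀^∞ ξ·φ_n(ξ)² dξ = (ω/8)^{−1/2} · (n!/Γ(n+α+1)) · Σ_{j=0}^{n} Σ_{l=0}^{n} ((−n)_j (−n)_l / ((α+1)_j (α+1)_l)) · Γ(α + 3/2 + j + l)/(j!·l!). -/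
/-!
Expanding `L_n^α` as a polynomial in `t = ωξ²/8`, the integrand `ξ φ_n(ξ)²` becomes a finite double
sum of Gaussian moments `ξ^{2α+2} t^{j+l} e^{-t}`, and each of these is a Gamma integral after the
substitution `t = (ω/8) ξ²`: `∫₀^∞ ξ^{2s-1} (bξ²)^k e^{-bξ²} dξ = b^{-s} Γ(s+k) / 2`.
-/

open Real MeasureTheory

/-- The generalized (associated) Laguerre polynomial
`L_n^α(t) = Σ_{j=0}^{n} ((−n)_j / ((α+1)_j · j!)) · t^j`. -/
noncomputable def laguerreL (α : ℝ) (n : ℕ) (t : ℝ) : ℝ :=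
  ∑ j ∈ Finset.range (n + 1),
    ((ascPochhammer ℝ j).eval (-(n : ℝ)) /
        ((ascPochhammer ℝ j).eval (α + 1) * (Nat.factorial j))) * t ^ j

open Set Finset

noncomputable def laguerreCoeff (α : ℝ) (n j : ℕ) : ℝ :=
  (ascPochhammer ℝ j).eval (-(n : ℝ)) / ((ascPochhammer ℝ j).eval (α + 1) * (Nat.factorial j))

theorem laguerreL_eq_sum_laguerreCoeff (α : ℝ) (n : ℕ) (t : ℝ) :
    laguerreL α n t = ∑ j ∈ range (n + 1), laguerreCoeff α n j * t ^ j :=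
  rfl

section GaussianMoments

variable {b s : ℝ}

theorem rpow_mul_mul_sq_pow {ξ : ℝ} (hξ : 0 < ξ) (k : ℕ) :
    ξ ^ (2 * s - 1) * (b * ξ ^ 2) ^ k = b ^ k * ξ ^ (2 * (s + k) - 1) := by
  rw [mul_pow, ← pow_mul, ← rpow_natCast ξ (2 * k), mul_left_comm, ← rpow_add hξ]
  push_cast
  ring_nf

theorem integrableOn_rpow_mul_mul_sq_pow_mul_exp_neg_mul_sq (hb : 0 < b) (hs : 0 < s) (k : ℕ) :
    IntegrableOn (fun ξ => ξ ^ (2 * s - 1) * (b * ξ ^ 2) ^ k * exp (-b * ξ ^ 2)) (Ioi 0) := by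
  have hexp : -1 < 2 * (s + k) - 1 := by have := k.cast_nonneg (α := ℝ); linarith
  refine IntegrableOn.congr_fun ((integrableOn_rpow_mul_exp_neg_mul_sq hb hexp).const_mul (b ^ k))
    (fun ξ hξ => ?_) measurableSet_Ioi
  rw [rpow_mul_mul_sq_pow hξ, mul_assoc]

theorem integral_rpow_mul_mul_sq_pow_mul_exp_neg_mul_sq (hb : 0 < b) (hs : 0 < s) (k : ℕ) :
    ∫ ξ in Ioi 0, ξ ^ (2 * s - 1) * (b * ξ ^ 2) ^ k * exp (-b * ξ ^ 2) =
      b ^ (-s) / 2 * Gamma (s + k) := by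
  have hexp : -1 < 2 * (s + k) - 1 := by have := k.cast_nonneg (α := ℝ); linarith
  calc ∫ ξ in Ioi 0, ξ ^ (2 * s - 1) * (b * ξ ^ 2) ^ k * exp (-b * ξ ^ 2)
      = b ^ k * ∫ ξ in Ioi 0, ξ ^ (2 * (s + k) - 1) * exp (-b * ξ ^ (2 : ℝ)) := by
        rw [← integral_const_mul]
        refine setIntegral_congr_fun measurableSet_Ioi fun ξ hξ => ?_
        rw [rpow_mul_mul_sq_pow hξ, rpow_two, mul_assoc]
    _ = b ^ k * (b ^ (-(s + k)) * (1 / 2) * Gamma (s + k)) := by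
        rw [integral_rpow_mul_exp_neg_mul_rpow two_pos hexp hb]
        ring_nf
    _ = b ^ (-s) / 2 * Gamma (s + k) := by
        rw [← rpow_natCast, ← mul_assoc, ← mul_assoc, ← rpow_add hb]
        ring_nf

theorem integral_rpow_mul_exp_neg_mul_sq_mul_sum_sq (hb : 0 < b) (hs : 0 < s)
    (S : Finset ℕ) (c : ℕ → ℝ) :
    ∫ ξ in Ioi 0, ξ ^ (2 * s - 1) * exp (-b * ξ ^ 2) * (∑ j ∈ S, c j * (b * ξ ^ 2) ^ j) ^ 2 =
      b ^ (-s) / 2 * ∑ j ∈ S, ∑ l ∈ S, c j * c l * Gamma (s + j + l) := by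
  have hexpand : ∀ ξ : ℝ,
      ξ ^ (2 * s - 1) * exp (-b * ξ ^ 2) * (∑ j ∈ S, c j * (b * ξ ^ 2) ^ j) ^ 2 =
        ∑ j ∈ S, ∑ l ∈ S,
          c j * c l * (ξ ^ (2 * s - 1) * (b * ξ ^ 2) ^ (j + l) * exp (-b * ξ ^ 2)) := by
    intro ξ
    rw [pow_two (∑ j ∈ S, _), sum_mul_sum, mul_sum]
    refine sum_congr rfl fun j _ => ?_
    rw [mul_sum]
    refine sum_congr rfl fun l _ => ?_
    ring
  have hint (j l : ℕ) := integrableOn_rpow_mul_mul_sq_pow_mul_exp_neg_mul_sq hb hs (j + l)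
  simp_rw [hexpand]
  rw [integral_finsetSum _ fun j _ => integrable_finsetSum _ fun l _ => (hint j l).const_mul _,
    mul_sum]
  refine sum_congr rfl fun j _ => ?_
  rw [integral_finsetSum _ fun l _ => (hint j l).const_mul _, mul_sum]
  refine sum_congr rfl fun l _ => ?_
  rw [integral_const_mul, integral_rpow_mul_mul_sq_pow_mul_exp_neg_mul_sq hb hs]
  push_cast
  ring_nf

end GaussianMoments

/-- For `ω > 0`, `α > 0` and the normalized isotonic eigenfunctions
`φ_n(ξ) = N_n·ξ^{α+1/2}·exp(−ωξ²/16)·L_n^α(ωξ²/8)` with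
`N_n = √(2(ω/8)^{α+1}·n!/Γ(n+α+1))`, the first moment equals
`∫₀^∞ ξ·φ_n(ξ)² dξ = (ω/8)^{−1/2}·(n!/Γ(n+α+1))·
  Σ_{j,l} ((−n)_j (−n)_l / ((α+1)_j (α+1)_l))·Γ(α+3/2+j+l)/(j!·l!)`. -/
theorem stmt_10 (ω α : ℝ) (hω : 0 < ω) (hα : 0 < α) (n : ℕ)
    (N : ℝ)
    (hN : N = Real.sqrt (2 * (ω / 8) ^ (α + 1) * (Nat.factorial n) /
      Real.Gamma (n + α + 1)))
    (φ : ℝ → ℝ)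
    (hφ : ∀ ξ : ℝ, φ ξ =
      N * ξ ^ (α + 1 / 2) * Real.exp (-ω * ξ ^ 2 / 16) * laguerreL α n (ω * ξ ^ 2 / 8)) :
    ∫ ξ in Set.Ioi (0 : ℝ), ξ * (φ ξ) ^ 2 =
      (ω / 8) ^ (-(1 / 2) : ℝ) * ((Nat.factorial n) / Real.Gamma (n + α + 1)) *
        ∑ j ∈ Finset.range (n + 1), ∑ l ∈ Finset.range (n + 1),
          ((ascPochhammer ℝ j).eval (-(n : ℝ)) * (ascPochhammer ℝ l).eval (-(n : ℝ)) /
              ((ascPochhammer ℝ j).eval (α + 1) * (ascPochhammer ℝ l).eval (α + 1))) *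
            Real.Gamma (α + 3 / 2 + j + l) / ((Nat.factorial j) * (Nat.factorial l)) := by
  have hb : 0 < ω / 8 := by positivity
  have hN2 : N ^ 2 = 2 * (ω / 8) ^ (α + 1) * n.factorial / Gamma (n + α + 1) := by
    rw [hN, sq_sqrt]
    have := Gamma_pos_of_pos (show 0 < n + α + 1 by positivity)
    positivity
  have hintegrand : ∀ ξ ∈ Ioi (0 : ℝ), ξ * φ ξ ^ 2 = N ^ 2 *
      (ξ ^ (2 * (α + 3 / 2) - 1) * exp (-(ω / 8) * ξ ^ 2) *
        (∑ j ∈ range (n + 1), laguerreCoeff α n j * (ω / 8 * ξ ^ 2) ^ j) ^ 2) := by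
    intro ξ hξ
    have hpow : ξ * (ξ ^ (α + 1 / 2)) ^ 2 = ξ ^ (2 * (α + 3 / 2) - 1) := by
      rw [← rpow_natCast, ← rpow_mul hξ.le, ← rpow_one_add' hξ.le (by positivity)]
      ring_nf
    have hexp : exp (-ω * ξ ^ 2 / 16) ^ 2 = exp (-(ω / 8) * ξ ^ 2) := by
      rw [← exp_nat_mul]
      ring_nf
    rw [hφ, ← laguerreL_eq_sum_laguerreCoeff, ← hpow, ← hexp,
      show ω / 8 * ξ ^ 2 = ω * ξ ^ 2 / 8 by ring]
    ring
  rw [setIntegral_congr_fun measurableSet_Ioi hintegrand, integral_const_mul,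
    integral_rpow_mul_exp_neg_mul_sq_mul_sum_sq hb (by positivity), hN2]
  have hbpow : (ω / 8) ^ (α + 1) * (ω / 8) ^ (-(α + 3 / 2)) = (ω / 8) ^ (-(1 / 2) : ℝ) := by
    rw [← rpow_add hb]
    ring_nf
  rw [← hbpow]
  simp only [mul_sum, laguerreCoeff]
  refine sum_congr rfl fun j _ => sum_congr rfl fun l _ => ?_
  ring
end

section
/- Let k > 0, ω > 0, E ∈ ℝ, σ ∈ {1, −1}, and let α, β, γ be real numbers with α + β + γ = −1. Suppose ψ : (0,∞) → ℝ is twice differentiable and satisfies, for all p > 0, the equation p·ψ″(p) + ψ′(p) + (α(α+β+1)/p)·ψ(p) + (3/(2k))·(E − V(p))·ψ(p) = 0, where V(p) = (3ω²/(2k))·p − σ·√p. Define φ : (0,∞) → ℝ by φ(ξ) = √ξ · ψ((k/24)ξ²). Then φ is twice differentiable and satisfies, for all ξ > 0, the equation −φ″(ξ) + [ω²(ξ − σξ₀)²/64 + (ε − 1/4)/ξ² − k/(24ω²)]·φ(ξ) = (E/4)·φ(ξ), where ξ₀ = (4/ω²)·√(k/6) and ε = −4α(α+β+1). -/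
/-!
Substituting `p = c ξ²` and `φ(ξ) = √ξ ψ(c ξ²)` gives
`φ″(ξ) = √ξ (4c (p ψ″(p) + ψ′(p)) − ψ(p) / (4ξ²))`: the operator `p ψ″ + ψ′` of the momentum
equation becomes a flat second derivative in `ξ`, and the `√ξ` prefactor contributes the
centrifugal shift `−1/(4ξ²)`. For `c = k/24` the momentum equation thus turns into the radial
one with potential `V(p)/4`, and since `σ² = 1` this completes the square to
`ω² (ξ − σ ξ₀)² / 64 − k / (24 ω²)`.
-/

open Real Filter Topology

theorem hasDerivAt_sqrt_mul {f : ℝ → ℝ} {f' x : ℝ} (hx : 0 < x) (hf : HasDerivAt f f' x) :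
    HasDerivAt (fun y => √y * f y) (√x * (f x / (2 * x) + f')) x := by
  refine ((hasDerivAt_sqrt hx.ne').mul hf).congr_deriv ?_
  have hs : 0 < √x := sqrt_pos.2 hx
  field_simp
  rw [sq_sqrt hx.le]
  ring

theorem hasDerivAt_comp_const_mul_sq {ψ : ℝ → ℝ} {c x : ℝ} (hψ : DifferentiableAt ℝ ψ (c * x ^ 2)) :
    HasDerivAt (fun y => ψ (c * y ^ 2)) (2 * c * x * deriv ψ (c * x ^ 2)) x := by
  have hq : HasDerivAt (fun y : ℝ => c * y ^ 2) (2 * c * x) x := by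
    simpa [mul_comm, mul_left_comm, mul_assoc] using (hasDerivAt_pow 2 x).const_mul c
  exact (hψ.hasDerivAt.comp x hq).congr_deriv (mul_comm _ _)

section SqrtMulCompSq

variable {ψ : ℝ → ℝ} {c x : ℝ}

theorem hasDerivAt_sqrt_mul_comp_sq (hx : 0 < x) (hψ : DifferentiableAt ℝ ψ (c * x ^ 2)) :
    HasDerivAt (fun y => √y * ψ (c * y ^ 2))
      (√x * (ψ (c * x ^ 2) / (2 * x) + 2 * c * x * deriv ψ (c * x ^ 2))) x :=
  hasDerivAt_sqrt_mul hx (hasDerivAt_comp_const_mul_sq hψ)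

theorem hasDerivAt_deriv_sqrt_mul_comp_sq (hc : 0 < c)
    (hψ : ∀ p, 0 < p → DifferentiableAt ℝ ψ p ∧ DifferentiableAt ℝ (deriv ψ) p) (hx : 0 < x) :
    HasDerivAt (deriv fun y => √y * ψ (c * y ^ 2))
      (√x * (4 * c * (c * x ^ 2 * deriv (deriv ψ) (c * x ^ 2) + deriv ψ (c * x ^ 2)) -
        ψ (c * x ^ 2) / (4 * x ^ 2))) x := by
  have hp : 0 < c * x ^ 2 := by positivity
  have hderiv : deriv (fun y => √y * ψ (c * y ^ 2)) =ᶠ[𝓝 x]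
      fun y => √y * (ψ (c * y ^ 2) / (2 * y) + 2 * c * y * deriv ψ (c * y ^ 2)) := by
    filter_upwards [Ioi_mem_nhds hx] with y (hy : 0 < y)
    exact (hasDerivAt_sqrt_mul_comp_sq hy (hψ _ (by positivity)).1).deriv
  have hψ₀ := hasDerivAt_comp_const_mul_sq (hψ _ hp).1
  have hψ₁ := hasDerivAt_comp_const_mul_sq (hψ _ hp).2
  have hlin : HasDerivAt (fun y : ℝ => 2 * c * y) (2 * c) x := by
    simpa using (hasDerivAt_id x).const_mul (2 * c)
  have hg := (hψ₀.div ((hasDerivAt_id x).const_mul 2) (by positivity)).add (hlin.mul hψ₁)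
  refine ((hasDerivAt_sqrt_mul hx hg).congr_of_eventuallyEq hderiv).congr_deriv ?_
  simp only [Pi.add_apply, Pi.mul_apply, Pi.div_apply, id]
  field_simp
  ring

end SqrtMulCompSq

theorem potential_div_four_eq_displaced_sq {k ω σ ξ : ℝ} (hk : 0 < k) (hω : ω ≠ 0)
    (hσ : σ ^ 2 = 1) (hξ : 0 ≤ ξ) :
    (3 * ω ^ 2 / (2 * k) * (k / 24 * ξ ^ 2) - σ * √(k / 24 * ξ ^ 2)) / 4 =
      ω ^ 2 * (ξ - σ * (4 / ω ^ 2 * √(k / 6))) ^ 2 / 64 - k / (24 * ω ^ 2) := by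
  obtain ⟨s, hs, rfl⟩ : ∃ s, 0 < s ∧ k = 24 * s ^ 2 :=
    ⟨√(k / 24), sqrt_pos.2 (by positivity), by rw [sq_sqrt (by positivity)]; ring⟩
  rw [show 24 * s ^ 2 / 24 * ξ ^ 2 = (s * ξ) ^ 2 by ring, sqrt_sq (by positivity),
    show 24 * s ^ 2 / 6 = (2 * s) ^ 2 by ring, sqrt_sq (by positivity),
    sub_sq, mul_pow σ, hσ, one_mul]
  field_simp
  ring

theorem stmt_11_general (k ω E : ℝ) (hk : 0 < k) (hω : 0 < ω)
    (σ : ℝ) (hσ : σ = 1 ∨ σ = -1)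
    (α β : ℝ)
    (V : ℝ → ℝ) (hV : ∀ p : ℝ, V p = 3 * ω ^ 2 / (2 * k) * p - σ * Real.sqrt p)
    (ψ : ℝ → ℝ)
    (hψdiff : ∀ p : ℝ, 0 < p → DifferentiableAt ℝ ψ p ∧ DifferentiableAt ℝ (deriv ψ) p)
    (hψeq : ∀ p : ℝ, 0 < p →
      p * deriv (deriv ψ) p + deriv ψ p + α * (α + β + 1) / p * ψ p +
        3 / (2 * k) * (E - V p) * ψ p = 0)
    (φ : ℝ → ℝ) (hφ : ∀ ξ : ℝ, φ ξ = Real.sqrt ξ * ψ (k / 24 * ξ ^ 2))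
    (ξ₀ ε : ℝ) (hξ₀ : ξ₀ = 4 / ω ^ 2 * Real.sqrt (k / 6))
    (hε : ε = -4 * α * (α + β + 1)) :
    (∀ ξ : ℝ, 0 < ξ → DifferentiableAt ℝ φ ξ ∧ DifferentiableAt ℝ (deriv φ) ξ) ∧
      ∀ ξ : ℝ, 0 < ξ →
        -deriv (deriv φ) ξ +
            (ω ^ 2 * (ξ - σ * ξ₀) ^ 2 / 64 + (ε - 1 / 4) / ξ ^ 2 -
              k / (24 * ω ^ 2)) * φ ξ =
          E / 4 * φ ξ := by
  have hc : 0 < k / 24 := by positivity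
  obtain rfl : φ = fun ξ => √ξ * ψ (k / 24 * ξ ^ 2) := funext hφ
  refine ⟨fun ξ hξ =>
    ⟨(hasDerivAt_sqrt_mul_comp_sq hξ (hψdiff _ (by positivity)).1).differentiableAt,
      (hasDerivAt_deriv_sqrt_mul_comp_sq hc hψdiff hξ).differentiableAt⟩, fun ξ hξ => ?_⟩
  set p := k / 24 * ξ ^ 2
  have hode : k / 6 * (p * deriv (deriv ψ) p + deriv ψ p) =
      -(4 * α * (α + β + 1) / ξ ^ 2 + (E - V p) / 4) * ψ p := by
    have := hψeq p (by positivity)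
    simp only [p] at this ⊢
    field_simp at this ⊢
    linear_combination 2 * this
  have hσ2 : σ ^ 2 = 1 := by rcases hσ with rfl | rfl <;> norm_num
  have hpot : V p / 4 = ω ^ 2 * (ξ - σ * ξ₀) ^ 2 / 64 - k / (24 * ω ^ 2) := by
    rw [hV, hξ₀]
    exact potential_div_four_eq_displaced_sq hk hω.ne' hσ2 hξ.le
  rw [(hasDerivAt_deriv_sqrt_mul_comp_sq hc hψdiff hξ).deriv, hε]
  linear_combination -√ξ * hode - √ξ * ψ p * hpot

/-- Change of variables `φ(ξ) = √ξ·ψ((k/24)ξ²)` transforming the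
momentum-space Schrödinger equation
`p·ψ″ + ψ′ + (α(α+β+1)/p)·ψ + (3/(2k))·(E − V(p))·ψ = 0` with
`V(p) = (3ω²/(2k))·p − σ·√p` into the effective displaced isotonic oscillator
`−φ″ + [ω²(ξ − σξ₀)²/64 + (ε − 1/4)/ξ² − k/(24ω²)]·φ = (E/4)·φ` on `ξ > 0`, where
`ξ₀ = (4/ω²)·√(k/6)` and `ε = −4α(α+β+1)`. -/
theorem stmt_11 (k ω E : ℝ) (hk : 0 < k) (hω : 0 < ω)
    (σ : ℝ) (hσ : σ = 1 ∨ σ = -1)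
    (α β γ : ℝ) (habc : α + β + γ = -1)
    (V : ℝ → ℝ) (hV : ∀ p : ℝ, V p = 3 * ω ^ 2 / (2 * k) * p - σ * Real.sqrt p)
    (ψ : ℝ → ℝ)
    (hψdiff : ∀ p : ℝ, 0 < p → DifferentiableAt ℝ ψ p ∧ DifferentiableAt ℝ (deriv ψ) p)
    (hψeq : ∀ p : ℝ, 0 < p →
      p * deriv (deriv ψ) p + deriv ψ p + α * (α + β + 1) / p * ψ p +
        3 / (2 * k) * (E - V p) * ψ p = 0)
    (φ : ℝ → ℝ) (hφ : ∀ ξ : ℝ, φ ξ = Real.sqrt ξ * ψ (k / 24 * ξ ^ 2))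
    (ξ₀ ε : ℝ) (hξ₀ : ξ₀ = 4 / ω ^ 2 * Real.sqrt (k / 6))
    (hε : ε = -4 * α * (α + β + 1)) :
    (∀ ξ : ℝ, 0 < ξ → DifferentiableAt ℝ φ ξ ∧ DifferentiableAt ℝ (deriv φ) ξ) ∧
      ∀ ξ : ℝ, 0 < ξ →
        -deriv (deriv φ) ξ +
            (ω ^ 2 * (ξ - σ * ξ₀) ^ 2 / 64 + (ε - 1 / 4) / ξ ^ 2 -
              k / (24 * ω ^ 2)) * φ ξ =
          E / 4 * φ ξ :=
  stmt_11_general k ω E hk hω σ hσ α β V hV ψ hψdiff hψeq φ hφ ξ₀ ε hξ₀ hε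
end

section
/- Let k > 0, ω > 0, σ ∈ {1, −1}, n ∈ ℕ, and set ξ₀ = (4/ω²)·√(k/6). Define φ : ℝ → ℝ by φ(ξ) = exp(−ω(ξ − σξ₀)²/16) · He_n(√(ω/4)·(ξ − σξ₀)), where He_n is the n-th probabilists' Hermite polynomial. Then: (i) for all ξ ∈ ℝ, −φ″(ξ) + (ω²(ξ − σξ₀)²/64 − k/(24ω²))·φ(ξ) = (E/4)·φ(ξ) with E = ω(n + 1/2) − k/(6ω²); and (ii) φ satisfies the Dirichlet boundary condition φ(0) = 0 if and only if He_n(√(ω/4)·ξ₀) = 0. -/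
open Real Polynomial

/-!
The Hermite function `ψₙ(t) = exp (-t²/4) Heₙ(t)` satisfies `ψₙ'' = (t²/4 - (n + 1/2)) ψₙ`:
differentiating `exp (-t²/4) p(t)` replaces `p` by `p' - (X/2) p`, and applying this twice to `Heₙ`
leaves a polynomial identity that is Hermite's equation `Heₙ'' = X Heₙ' - n Heₙ`. Since
`b = √(ω/4)` has `b² = ω/4`, `φ(ξ) = ψₙ(b (ξ - σξ₀))`, so `φ'' = b² ψₙ''(b (ξ - σξ₀))`, which is (i).
For (ii), `φ(0)` is a nonzero multiple of `Heₙ(-σ b ξ₀)`, and `Heₙ(-x) = (-1)ⁿ Heₙ(x)`.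
-/

theorem derivative_hermite_succ (n : ℕ) :
    derivative (hermite (n + 1)) = ((n : ℤ) + 1) • hermite n := by
  induction n with
  | zero => simp [hermite_zero]
  | succ m ih =>
    rw [hermite_succ (m + 1), derivative_sub, derivative_mul, derivative_X, ih,
      derivative_smul, hermite_succ m]
    push_cast
    simp only [mul_smul_comm, one_mul]
    module

theorem derivative_derivative_hermite (n : ℕ) :
    derivative (derivative (hermite n)) = X * derivative (hermite n) - (n : ℤ) • hermite n := by
  cases n with
  | zero => simp [hermite_zero]
  | succ m =>
    rw [derivative_hermite_succ, derivative_smul, hermite_succ m]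
    push_cast
    simp only [mul_smul_comm]
    module

theorem hermite_comp_neg_X (n : ℕ) : (hermite n).comp (-X) = ((-1 : ℤ) ^ n) • hermite n := by
  induction n with
  | zero => simp [hermite_zero]
  | succ m ih =>
    have hderiv :
        (derivative (hermite m)).comp (-X) = -((-1 : ℤ) ^ m • derivative (hermite m)) := by
      have h := derivative_comp (hermite m) (-X)
      rw [ih, derivative_smul] at h
      simp only [derivative_neg, derivative_X, neg_mul, one_mul] at h
      linear_combination (norm := module) h
    rw [hermite_succ, sub_comp, mul_comp, X_comp, ih, hderiv, pow_succ]
    simp only [mul_smul_comm, neg_mul, mul_neg, mul_one, neg_smul, smul_neg]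
    module

theorem aeval_neg_hermite {R : Type*} [CommRing R] (n : ℕ) (x : R) :
    aeval (-x) (hermite n) = (-1) ^ n * aeval x (hermite n) := by
  simpa [aeval_comp] using congrArg (aeval x) (hermite_comp_neg_X n)

theorem aeval_sign_mul_hermite_eq_zero_iff {σ : ℝ} (hσ : σ = 1 ∨ σ = -1) (n : ℕ) (x : ℝ) :
    aeval (σ * x) (hermite n) = 0 ↔ aeval x (hermite n) = 0 := by
  rcases hσ with rfl | rfl
  · rw [one_mul]
  · rw [neg_one_mul, aeval_neg_hermite, mul_eq_zero, or_iff_right (by simp)]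

noncomputable def gaussianDeriv (p : ℝ[X]) : ℝ[X] := derivative p - C (1 / 2) * X * p

theorem hasDerivAt_exp_mul_eval (p : ℝ[X]) (t : ℝ) :
    HasDerivAt (fun s => exp (-s ^ 2 / 4) * p.eval s)
      (exp (-t ^ 2 / 4) * (gaussianDeriv p).eval t) t := by
  have hexp : HasDerivAt (fun s : ℝ => exp (-s ^ 2 / 4)) (exp (-t ^ 2 / 4) * (-t / 2)) t := by
    have h : HasDerivAt (fun s : ℝ => -s ^ 2 / 4) (-t / 2) t :=
      (((hasDerivAt_id' t).pow 2).neg.div_const 4).congr_deriv (by simp; ring)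
    exact h.exp
  refine (hexp.mul (p.hasDerivAt t)).congr_deriv ?_
  simp only [gaussianDeriv, eval_sub, eval_mul, eval_C, eval_X]
  ring

theorem deriv_exp_mul_eval (p : ℝ[X]) :
    deriv (fun s => exp (-s ^ 2 / 4) * p.eval s) =
      fun t => exp (-t ^ 2 / 4) * (gaussianDeriv p).eval t :=
  funext fun t => (hasDerivAt_exp_mul_eval p t).deriv

theorem gaussianDeriv_gaussianDeriv_hermite (n : ℕ) :
    gaussianDeriv (gaussianDeriv ((hermite n).map (Int.castRingHom ℝ))) =
      (C (1 / 4) * X ^ 2 - C ((n : ℝ) + 1 / 2)) * (hermite n).map (Int.castRingHom ℝ) := by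
  set P := (hermite n).map (Int.castRingHom ℝ)
  have hode : derivative (derivative P) = X * derivative P - C (n : ℝ) * P := by
    simpa [P, derivative_map, zsmul_eq_mul] using
      congrArg (map (Int.castRingHom ℝ)) (derivative_derivative_hermite n)
  simp only [gaussianDeriv, derivative_sub, derivative_mul, derivative_C, derivative_X, hode]
  have hquarter : C (1 / 4 : ℝ) = C (1 / 2) * C (1 / 2) := by rw [← C_mul]; norm_num
  have hhalf : C (1 / 2 : ℝ) + C (1 / 2) = 1 := by rw [← C_add]; norm_num
  rw [hquarter, C_add]
  linear_combination (-(X * derivative P)) * hhalf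

noncomputable def hermiteFunction (n : ℕ) (t : ℝ) : ℝ := exp (-t ^ 2 / 4) * aeval t (hermite n)

theorem deriv_deriv_hermiteFunction (n : ℕ) (t : ℝ) :
    deriv (deriv (hermiteFunction n)) t = (t ^ 2 / 4 - (n + 1 / 2)) * hermiteFunction n t := by
  have hfun : hermiteFunction n =
      fun s => exp (-s ^ 2 / 4) * ((hermite n).map (Int.castRingHom ℝ)).eval s := by
    ext s
    rw [hermiteFunction, aeval_def, eval₂_eq_eval_map, algebraMap_int_eq]
  rw [hfun, deriv_exp_mul_eval, deriv_exp_mul_eval, gaussianDeriv_gaussianDeriv_hermite]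
  simp only [eval_mul, eval_sub, eval_C, eval_pow, eval_X]
  ring

theorem deriv_comp_mul_sub (f : ℝ → ℝ) (b c : ℝ) :
    deriv (fun x => f (b * (x - c))) = fun x => b * deriv f (b * (x - c)) :=
  funext fun x => by
    rw [deriv_comp_sub_const (f := fun y => f (b * y)), deriv_comp_mul_left, smul_eq_mul]

theorem deriv_deriv_comp_mul_sub (f : ℝ → ℝ) (b c x : ℝ) :
    deriv (deriv fun x => f (b * (x - c))) x = b ^ 2 * deriv (deriv f) (b * (x - c)) := by
  rw [deriv_comp_mul_sub, deriv_const_mul_field', deriv_comp_mul_sub]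
  ring

theorem stmt_12_general (k ω : ℝ) (hω : 0 < ω)
    (σ : ℝ) (hσ : σ = 1 ∨ σ = -1) (n : ℕ)
    (ξ₀ : ℝ)
    (φ : ℝ → ℝ)
    (hφ : ∀ ξ : ℝ, φ ξ = Real.exp (-ω * (ξ - σ * ξ₀) ^ 2 / 16) *
      aeval (Real.sqrt (ω / 4) * (ξ - σ * ξ₀)) (hermite n))
    (E : ℝ) (hE : E = ω * (n + 1 / 2) - k / (6 * ω ^ 2)) :
    (∀ ξ : ℝ,
        -deriv (deriv φ) ξ +
            (ω ^ 2 * (ξ - σ * ξ₀) ^ 2 / 64 - k / (24 * ω ^ 2)) * φ ξ =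
          E / 4 * φ ξ) ∧
      (φ 0 = 0 ↔ aeval (Real.sqrt (ω / 4) * ξ₀) (hermite n) = (0 : ℝ)) := by
  set b := √(ω / 4)
  have hb : b ^ 2 = ω / 4 := sq_sqrt (by positivity)
  have hφ_eq : φ = fun ξ => hermiteFunction n (b * (ξ - σ * ξ₀)) := by
    ext ξ
    rw [hφ, hermiteFunction, mul_pow, hb]
    congr 2
    ring
  refine ⟨fun ξ => ?_, ?_⟩
  · rw [hφ_eq, deriv_deriv_comp_mul_sub, deriv_deriv_hermiteFunction, hE, mul_pow, hb]
    ring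
  · have hneg : -σ = 1 ∨ -σ = -1 := by rcases hσ with rfl | rfl <;> norm_num
    rw [hφ, mul_eq_zero, or_iff_right (exp_ne_zero _),
      show b * (0 - σ * ξ₀) = -σ * (b * ξ₀) by ring]
    exact aeval_sign_mul_hermite_eq_zero_iff hneg n _

/-- For `k > 0`, `ω > 0`, `σ = ±1`, `n ∈ ℕ`, `ξ₀ = (4/ω²)·√(k/6)`, the
function `φ(ξ) = exp(−ω(ξ − σξ₀)²/16)·He_n(√(ω/4)·(ξ − σξ₀))` (with `He_n` the
probabilists' Hermite polynomial) satisfies (i) for all `ξ`,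
`−φ″ + (ω²(ξ − σξ₀)²/64 − k/(24ω²))·φ = (E/4)·φ` with `E = ω(n + 1/2) − k/(6ω²)`, and
(ii) the Dirichlet condition `φ(0) = 0` holds iff `He_n(√(ω/4)·ξ₀) = 0`. -/
theorem stmt_12 (k ω : ℝ) (hk : 0 < k) (hω : 0 < ω)
    (σ : ℝ) (hσ : σ = 1 ∨ σ = -1) (n : ℕ)
    (ξ₀ : ℝ) (hξ₀ : ξ₀ = 4 / ω ^ 2 * Real.sqrt (k / 6))
    (φ : ℝ → ℝ)
    (hφ : ∀ ξ : ℝ, φ ξ = Real.exp (-ω * (ξ - σ * ξ₀) ^ 2 / 16) *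
      aeval (Real.sqrt (ω / 4) * (ξ - σ * ξ₀)) (hermite n))
    (E : ℝ) (hE : E = ω * (n + 1 / 2) - k / (6 * ω ^ 2)) :
    (∀ ξ : ℝ,
        -deriv (deriv φ) ξ +
            (ω ^ 2 * (ξ - σ * ξ₀) ^ 2 / 64 - k / (24 * ω ^ 2)) * φ ξ =
          E / 4 * φ ξ) ∧
      (φ 0 = 0 ↔ aeval (Real.sqrt (ω / 4) * ξ₀) (hermite n) = (0 : ℝ)) :=
  stmt_12_general k ω hω σ hσ n ξ₀ φ hφ E hE
end

section
/- Let ℓ ∈ ℝ with ℓ ∉ {0, −1, −1/2}, and let f, g : ℝ → ℝ be differentiable functions such that f is nowhere zero and the Chiellini identity g′(y)f(y) − g(y)f′(y) + ℓ(ℓ+1)f(y)³ = 0 holds for all y ∈ ℝ. Let x : ℝ → ℝ be twice differentiable and define u(t) = ẋ(t) − g(x(t))/(ℓ·f(x(t))); assume u(t) > 0 for all t. Then for all t, d/dt[(ℓ/(ℓ+1))·u(t)^{(ℓ+1)/ℓ}] − ℓ·f(x(t))·u(t)^{(ℓ+1)/ℓ} = u(t)^{1/ℓ}·(ẍ(t)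 + f(x(t))·ẋ(t) + g(x(t))). Consequently, the Euler–Lagrange equation of the Lagrangian L(x, v) = (ℓ²/((ℓ+1)(2ℓ+1)))·(v − g(x)/(ℓf(x)))^{(2ℓ+1)/ℓ} holds along x if and only if x solves the Liénard equation ẍ + f(x)ẋ + g(x) = 0. -/
open Real

/-!
Chiellini's identity says exactly that `h = g / (ℓ f)` satisfies `h' = -(ℓ + 1) f`, so along a
path `x` the quantity `u = ẋ - h(x)` has derivative `ẍ + (ℓ + 1) f(x) ẋ`. Differentiating the
momentum `ℓ/(ℓ+1) · u^{(ℓ+1)/ℓ}` by the chain rule gives `u^{1/ℓ} (ẍ + (ℓ + 1) f(x) ẋ)`, and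
subtracting `ℓ f(x) u^{(ℓ+1)/ℓ} = u^{1/ℓ} (ℓ f(x) ẋ - g(x))` leaves `u^{1/ℓ}` times the Liénard
expression. Since `u > 0`, the factor `u^{1/ℓ}` never vanishes.
-/

theorem hasDerivAt_div_of_chiellini {f g : ℝ → ℝ} {ℓ y : ℝ} (hf : DifferentiableAt ℝ f y)
    (hg : DifferentiableAt ℝ g y) (hℓ : ℓ ≠ 0) (hfy : f y ≠ 0)
    (hCh : deriv g y * f y - g y * deriv f y + ℓ * (ℓ + 1) * f y ^ 3 = 0) :
    HasDerivAt (fun z => g z / (ℓ * f z)) (-(ℓ + 1) * f y) y := by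
  have hden : ℓ * f y ≠ 0 := mul_ne_zero hℓ hfy
  refine (hg.hasDerivAt.div (hf.hasDerivAt.const_mul ℓ) hden).congr_deriv ?_
  rw [div_eq_iff (pow_ne_zero 2 hden)]
  linear_combination ℓ * hCh

theorem HasDerivAt.div_add_one_mul_rpow {u : ℝ → ℝ} {u' ℓ t : ℝ} (hu : HasDerivAt u u' t)
    (hut : u t ≠ 0) (hℓ : ℓ ≠ 0) (hℓ1 : ℓ + 1 ≠ 0) :
    HasDerivAt (fun s => ℓ / (ℓ + 1) * u s ^ ((ℓ + 1) / ℓ)) (u t ^ (1 / ℓ) * u') t := by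
  have h := (hu.rpow_const (p := (ℓ + 1) / ℓ) (Or.inl hut)).const_mul (ℓ / (ℓ + 1))
  refine h.congr_deriv ?_
  have hp : (ℓ + 1) / ℓ - 1 = 1 / ℓ := by field_simp; ring
  rw [hp]
  field_simp

/-- Let `ℓ ∉ {0, −1, −1/2}` and let `f, g` be differentiable with `f`
nowhere zero, satisfying the Chiellini identity `g′f − gf′ + ℓ(ℓ+1)f³ = 0` on `ℝ`.
For twice differentiable `x : ℝ → ℝ` with `u(t) = ẋ(t) − g(x(t))/(ℓf(x(t))) > 0`,
one has
`d/dt[(ℓ/(ℓ+1))·u^{(ℓ+1)/ℓ}] − ℓ·f(x)·u^{(ℓ+1)/ℓ} = u^{1/ℓ}·(ẍ + f(x)ẋ + g(x))`;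
consequently the Euler–Lagrange equation
`d/dt[(ℓ/(ℓ+1))·u^{(ℓ+1)/ℓ}] = ℓ·f(x)·u^{(ℓ+1)/ℓ}` of the Lagrangian
`L(x,v) = (ℓ²/((ℓ+1)(2ℓ+1)))·(v − g(x)/(ℓf(x)))^{(2ℓ+1)/ℓ}` holds along `x` iff `x`
solves the Liénard equation `ẍ + f(x)ẋ + g(x) = 0`. -/
theorem stmt_15 (ℓ : ℝ) (hℓ : ℓ ≠ 0 ∧ ℓ ≠ -1 ∧ ℓ ≠ -1 / 2)
    (f g : ℝ → ℝ) (hf : Differentiable ℝ f) (hg : Differentiable ℝ g)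
    (hfne : ∀ y : ℝ, f y ≠ 0)
    (hCh : ∀ y : ℝ,
      deriv g y * f y - g y * deriv f y + ℓ * (ℓ + 1) * (f y) ^ 3 = 0)
    (x : ℝ → ℝ)
    (hx : ∀ t : ℝ, DifferentiableAt ℝ x t ∧ DifferentiableAt ℝ (deriv x) t)
    (u : ℝ → ℝ) (hu : ∀ t : ℝ, u t = deriv x t - g (x t) / (ℓ * f (x t)))
    (hupos : ∀ t : ℝ, 0 < u t) :
    (∀ t : ℝ,
        deriv (fun s => ℓ / (ℓ + 1) * u s ^ ((ℓ + 1) / ℓ)) t -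
            ℓ * f (x t) * u t ^ ((ℓ + 1) / ℓ) =
          u t ^ (1 / ℓ) *
            (deriv (deriv x) t + f (x t) * deriv x t + g (x t))) ∧
      ((∀ t : ℝ,
          deriv (fun s => ℓ / (ℓ + 1) * u s ^ ((ℓ + 1) / ℓ)) t =
            ℓ * f (x t) * u t ^ ((ℓ + 1) / ℓ)) ↔
        ∀ t : ℝ, deriv (deriv x) t + f (x t) * deriv x t + g (x t) = 0) := by
  obtain ⟨hℓ0, hℓ1, -⟩ := hℓ
  have hℓ1' : ℓ + 1 ≠ 0 := fun h => hℓ1 (by linarith)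
  have hu_fun : u = fun s => deriv x s - g (x s) / (ℓ * f (x s)) := funext hu
  have hdu : ∀ t, HasDerivAt u (deriv (deriv x) t + (ℓ + 1) * f (x t) * deriv x t) t := by
    intro t
    have hh := hasDerivAt_div_of_chiellini (hf (x t)) (hg (x t)) hℓ0 (hfne _) (hCh _)
    rw [hu_fun]
    exact ((hx t).2.hasDerivAt.sub (hh.comp t (hx t).1.hasDerivAt)).congr_deriv (by ring)
  have identity : ∀ t, deriv (fun s => ℓ / (ℓ + 1) * u s ^ ((ℓ + 1) / ℓ)) t -
      ℓ * f (x t) * u t ^ ((ℓ + 1) / ℓ) =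
        u t ^ (1 / ℓ) * (deriv (deriv x) t + f (x t) * deriv x t + g (x t)) := by
    intro t
    have hp : (ℓ + 1) / ℓ = 1 / ℓ + 1 := by field_simp; ring
    rw [((hdu t).div_add_one_mul_rpow (hupos t).ne' hℓ0 hℓ1').deriv, hp,
      rpow_add_one (hupos t).ne', hu t]
    field_simp [hfne (x t)]
    ring
  refine ⟨identity, forall_congr' fun t => ?_⟩
  rw [← sub_eq_zero, identity t, mul_eq_zero, or_iff_right (rpow_pos_of_pos (hupos t) _).ne']
end

section
/- Let ℓ ∈ ℝ with ℓ ∉ {0, −1, −1/2}, let u > 0 and A ∈ ℝ, and set v = u + A, L = (ℓ²/((ℓ+1)(2ℓ+1)))·u^{(2ℓ+1)/ℓ}, and p = (ℓ/(ℓ+1))·u^{(ℓ+1)/ℓ}. Then ((ℓ+1)/ℓ)·p = u^{(ℓ+1)/ℓ} > 0, (((ℓ+1)/ℓ)·p)^{(2ℓ+1)/(ℓ+1)} = u^{(2ℓ+1)/ℓ}, and the Legendre transform satisfies p·v − L = A·p + (ℓ/(2ℓ+1))·(((ℓ+1)/ℓ)·p)^{(2ℓ+1)/(ℓ+1)}.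 -/
open Real

/-! With `s = u^{(ℓ+1)/ℓ}` we have `p = ℓ/(ℓ+1) · s`, so `((ℓ+1)/ℓ)·p = s`, and the exponent
laws for the positive base `u` give `s^{(2ℓ+1)/(ℓ+1)} = u^{(2ℓ+1)/ℓ} = s·u`. After this
substitution the Legendre transform is a rational identity in `ℓ`, resting on
`ℓ/(ℓ+1) − ℓ²/((ℓ+1)(2ℓ+1)) = ℓ/(2ℓ+1)`. -/

lemma succ_div_add_one {ℓ : ℝ} (hℓ : ℓ ≠ 0) : (ℓ + 1) / ℓ + 1 = (2 * ℓ + 1) / ℓ := by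
  field_simp
  ring

lemma succ_div_mul_two_mul_add_one_div_succ {ℓ : ℝ} (hℓ : ℓ ≠ 0) (hℓ1 : ℓ + 1 ≠ 0) :
    (ℓ + 1) / ℓ * ((2 * ℓ + 1) / (ℓ + 1)) = (2 * ℓ + 1) / ℓ := by
  field_simp

lemma rpow_succ_div_mul_self {u ℓ : ℝ} (hu : 0 < u) (hℓ : ℓ ≠ 0) :
    u ^ ((ℓ + 1) / ℓ) * u = u ^ ((2 * ℓ + 1) / ℓ) := by
  rw [← rpow_add_one hu.ne', succ_div_add_one hℓ]

lemma rpow_succ_div_rpow {u ℓ : ℝ} (hu : 0 ≤ u) (hℓ : ℓ ≠ 0) (hℓ1 : ℓ + 1 ≠ 0) :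
    (u ^ ((ℓ + 1) / ℓ)) ^ ((2 * ℓ + 1) / (ℓ + 1)) = u ^ ((2 * ℓ + 1) / ℓ) := by
  rw [← rpow_mul hu, succ_div_mul_two_mul_add_one_div_succ hℓ hℓ1]

lemma div_succ_sub_sq_div {ℓ : ℝ} (hℓ1 : ℓ + 1 ≠ 0) (hℓ2 : 2 * ℓ + 1 ≠ 0) :
    ℓ / (ℓ + 1) - ℓ ^ 2 / ((ℓ + 1) * (2 * ℓ + 1)) = ℓ / (2 * ℓ + 1) := by
  rw [div_sub_div _ _ hℓ1 (mul_ne_zero hℓ1 hℓ2),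
    div_eq_div_iff (mul_ne_zero hℓ1 (mul_ne_zero hℓ1 hℓ2)) hℓ2]
  ring

lemma legendre_transform_eq {ℓ s u A : ℝ} (hℓ1 : ℓ + 1 ≠ 0) (hℓ2 : 2 * ℓ + 1 ≠ 0) :
    ℓ / (ℓ + 1) * s * (u + A) - ℓ ^ 2 / ((ℓ + 1) * (2 * ℓ + 1)) * (s * u) =
      A * (ℓ / (ℓ + 1) * s) + ℓ / (2 * ℓ + 1) * (s * u) := by
  linear_combination s * u * div_succ_sub_sq_div hℓ1 hℓ2

/-- The Legendre-transform computation of the branched Hamiltonian: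
for `ℓ ∉ {0, −1, −1/2}`, `u > 0`, `A ∈ ℝ`, with `v = u + A`,
`L = (ℓ²/((ℓ+1)(2ℓ+1)))·u^{(2ℓ+1)/ℓ}` and `p = (ℓ/(ℓ+1))·u^{(ℓ+1)/ℓ}`, one has
`((ℓ+1)/ℓ)·p = u^{(ℓ+1)/ℓ} > 0`, `(((ℓ+1)/ℓ)·p)^{(2ℓ+1)/(ℓ+1)} = u^{(2ℓ+1)/ℓ}`, and
`p·v − L = A·p + (ℓ/(2ℓ+1))·(((ℓ+1)/ℓ)·p)^{(2ℓ+1)/(ℓ+1)}`. -/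
theorem stmt_16 (ℓ : ℝ) (hℓ : ℓ ≠ 0 ∧ ℓ ≠ -1 ∧ ℓ ≠ -1 / 2)
    (u A : ℝ) (hu : 0 < u)
    (v L p : ℝ) (hv : v = u + A)
    (hL : L = ℓ ^ 2 / ((ℓ + 1) * (2 * ℓ + 1)) * u ^ ((2 * ℓ + 1) / ℓ))
    (hp : p = ℓ / (ℓ + 1) * u ^ ((ℓ + 1) / ℓ)) :
    (ℓ + 1) / ℓ * p = u ^ ((ℓ + 1) / ℓ) ∧
      0 < (ℓ + 1) / ℓ * p ∧
      ((ℓ + 1) / ℓ * p) ^ ((2 * ℓ + 1) / (ℓ + 1)) = u ^ ((2 * ℓ + 1) / ℓ) ∧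
      p * v - L = A * p + ℓ / (2 * ℓ + 1) * ((ℓ + 1) / ℓ * p) ^ ((2 * ℓ + 1) / (ℓ + 1)) := by
  obtain ⟨hℓ0, hℓ1, hℓ2⟩ := hℓ
  have hℓ1' : ℓ + 1 ≠ 0 := fun h => hℓ1 (by linarith)
  have hℓ2' : 2 * ℓ + 1 ≠ 0 := fun h => hℓ2 (by linarith)
  have hs : (ℓ + 1) / ℓ * p = u ^ ((ℓ + 1) / ℓ) := by
    rw [hp]
    field_simp
  have hpow : ((ℓ + 1) / ℓ * p) ^ ((2 * ℓ + 1) / (ℓ + 1)) = u ^ ((2 * ℓ + 1) / ℓ) := by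
    rw [hs, rpow_succ_div_rpow hu.le hℓ0 hℓ1']
  refine ⟨hs, hs ▸ rpow_pos_of_pos hu _, hpow, ?_⟩
  rw [hpow, hv, hL, hp, ← rpow_succ_div_mul_self hu hℓ0]
  exact legendre_transform_eq hℓ1' hℓ2'
end

section
/- Let k ≠ 0, ω ∈ ℝ, x ∈ ℝ, and u ≠ 0 be real numbers, and set A = −3(ω²/k + kx²/9), v = u + A, L = 1/(2u), and p = −1/(2u²). Then p < 0, u = σ/√(−2p) where σ = 1 if u > 0 and σ = −1 if u < 0, and p·v − L = −3p·(kx²/9 + ω²/k) − σ·√(−2p). In particular, corresponding to the two branches σ = ±1 of the multivalued inverse of v ↦ p, the Legendre transform yields the pair of branched Hamiltonians H^∓ = −3p(kx²/9 + ω²/k) ∓ √(−2p) on p < 0. -/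
open Real

/-!
With `L = 1/(2u)` and `p = ∂L/∂u = −1/(2u²)` one has `√(−2p) = 1/|u|`, so the inverse of
`u ↦ p` is `u = σ|u| = σ/√(−2p)` on the branch of sign `σ`. Then `p·u − L = −1/u = −σ√(−2p)`,
and the shift `v = u + A` only contributes `p·A`.
-/

lemma momentum_neg {u : ℝ} (hu : u ≠ 0) : -1 / (2 * u ^ 2) < 0 :=
  div_neg_of_neg_of_pos (by norm_num) (by positivity)

lemma sqrt_neg_two_mul_momentum (u : ℝ) : √(-2 * (-1 / (2 * u ^ 2))) = |u|⁻¹ := by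
  rw [show -2 * (-1 / (2 * u ^ 2)) = |u|⁻¹ ^ 2 by rw [inv_pow, sq_abs]; ring,
    sqrt_sq (inv_nonneg.mpr (abs_nonneg u))]

section Branch

variable {u σ : ℝ} (hu : u ≠ 0) (hσ : (0 < u → σ = 1) ∧ (u < 0 → σ = -1))
include hu hσ

lemma mul_abs_eq_of_branch : σ * |u| = u := by
  rcases hu.lt_or_gt with h | h
  · rw [hσ.2 h, abs_of_neg h]; ring
  · rw [hσ.1 h, abs_of_pos h]; ring

lemma mul_abs_inv_eq_of_branch : σ * |u|⁻¹ = u⁻¹ := by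
  rcases hu.lt_or_gt with h | h
  · rw [hσ.2 h, abs_of_neg h, inv_neg, neg_one_mul, neg_neg]
  · rw [hσ.1 h, abs_of_pos h, one_mul]

end Branch

theorem stmt_17_general (k ω x u : ℝ) (hu : u ≠ 0)
    (A v L p σ : ℝ)
    (hA : A = -3 * (ω ^ 2 / k + k * x ^ 2 / 9))
    (hv : v = u + A) (hL : L = 1 / (2 * u)) (hp : p = -1 / (2 * u ^ 2))
    (hσ : (0 < u → σ = 1) ∧ (u < 0 → σ = -1)) :
    p < 0 ∧
      u = σ / Real.sqrt (-2 * p) ∧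
      p * v - L = -3 * p * (k * x ^ 2 / 9 + ω ^ 2 / k) - σ * Real.sqrt (-2 * p) := by
  subst hp
  rw [sqrt_neg_two_mul_momentum, div_inv_eq_mul, mul_abs_eq_of_branch hu hσ,
    mul_abs_inv_eq_of_branch hu hσ, hv, hL, hA]
  refine ⟨momentum_neg hu, rfl, ?_⟩
  field_simp
  ring

/-- The `ℓ = −1/3` Legendre transform for the modified Emden equation:
for `k ≠ 0`, `ω, x ∈ ℝ`, `u ≠ 0`, with `A = −3(ω²/k + kx²/9)`, `v = u + A`,
`L = 1/(2u)`, `p = −1/(2u²)` and `σ = 1` if `u > 0`, `σ = −1` if `u < 0`, one has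
`p < 0`, `u = σ/√(−2p)`, and `p·v − L = −3p·(kx²/9 + ω²/k) − σ·√(−2p)`: the two
branches `σ = ±1` yield the branched Hamiltonians
`H^∓ = −3p(kx²/9 + ω²/k) ∓ √(−2p)` on `p < 0`. -/
theorem stmt_17 (k ω x u : ℝ) (hk : k ≠ 0) (hu : u ≠ 0)
    (A v L p σ : ℝ)
    (hA : A = -3 * (ω ^ 2 / k + k * x ^ 2 / 9))
    (hv : v = u + A) (hL : L = 1 / (2 * u)) (hp : p = -1 / (2 * u ^ 2))
    (hσ : (0 < u → σ = 1) ∧ (u < 0 → σ = -1)) :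
    p < 0 ∧
      u = σ / Real.sqrt (-2 * p) ∧
      p * v - L = -3 * p * (k * x ^ 2 / 9 + ω ^ 2 / k) - σ * Real.sqrt (-2 * p) :=
  stmt_17_general k ω x u hu A v L p σ hA hv hL hp hσ
end

section
/- Let α, β, γ be real numbers with α + β + γ = −1, let m : ℝ → ℝ be a twice continuously differentiable positive function, and let ψ : ℝ → ℝ be twice differentiable. Then for all p ∈ ℝ, −(1/4)·[ m(p)^α · (d/dp)( m^β · (d/dp)( m^γ · ψ ) )(p) + m(p)^γ · (d/dp)( m^β · (d/dp)( m^α · ψ ) )(p) ] = −(1/(2m(p)))·[ ψ″(p) − (m′(p)/m(p))·ψ′(p) + ((β+1)/2)·(2m′(p)²/m(p)² − m″(p)/m(p))·ψ(p) + α(α+β+1)·(m′(p)²/m(p)²)·ψ(p) ]. -/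
open Real

/-!
Writing `a = m'/m`, one has `(m^s ψ)' = m^s (ψ' + s a ψ)` and `a' = m''/m - a²`, so each ordered
product `m^α (m^β (m^γ ψ)')'` is `m^(α+β+γ) = m⁻¹` times a second-order expression in `ψ` whose
coefficients are polynomials in `α, β, γ, a, m''/m`. Averaging it with its `α ↔ γ` mirror and
eliminating `γ = -1 - α - β` gives the stated form.
-/

lemma hasDerivAt_rpow_mul {m ψ : ℝ → ℝ} {m' ψ' p : ℝ} (s : ℝ) (hm : HasDerivAt m m' p)
    (hpos : 0 < m p) (hψ : HasDerivAt ψ ψ' p) :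
    HasDerivAt (fun q => m q ^ s * ψ q) (m p ^ s * (ψ' + s * (m' / m p) * ψ p)) p := by
  refine ((hm.rpow_const (Or.inl hpos.ne')).mul hψ).congr_deriv ?_
  rw [rpow_sub_one hpos.ne']
  field_simp
  ring

lemma deriv_rpow_mul {m ψ : ℝ → ℝ} (s : ℝ) (hm : Differentiable ℝ m) (hpos : ∀ q, 0 < m q)
    (hψ : Differentiable ℝ ψ) :
    deriv (fun q => m q ^ s * ψ q) =
      fun q => m q ^ s * (deriv ψ q + s * (deriv m q / m q) * ψ q) :=
  funext fun q => (hasDerivAt_rpow_mul s (hm q).hasDerivAt (hpos q) (hψ q).hasDerivAt).deriv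

lemma rpow_mul_deriv_rpow_mul_deriv_rpow_mul {m ψ : ℝ → ℝ} {p : ℝ} (α β γ : ℝ)
    (hm : Differentiable ℝ m) (hm' : DifferentiableAt ℝ (deriv m) p) (hpos : ∀ q, 0 < m q)
    (hψ : Differentiable ℝ ψ) (hψ' : DifferentiableAt ℝ (deriv ψ) p) :
    m p ^ α * deriv (fun q => m q ^ β * deriv (fun r => m r ^ γ * ψ r) q) p =
      m p ^ (α + β + γ) * (deriv (deriv ψ) p + (β + 2 * γ) * (deriv m p / m p) * deriv ψ p +
        γ * ((β + γ - 1) * (deriv m p / m p) ^ 2 + deriv (deriv m) p / m p) * ψ p) := by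
  have hmp := hpos p
  have hg : HasDerivAt (fun q => deriv ψ q + γ * (deriv m q / m q) * ψ q)
      (deriv (deriv ψ) p + γ * ((deriv (deriv m) p * m p - deriv m p * deriv m p) / m p ^ 2)
        * ψ p + γ * (deriv m p / m p) * deriv ψ p) p :=
    (hψ'.hasDerivAt.add (((hm'.hasDerivAt.div (hm p).hasDerivAt hmp.ne').const_mul γ).mul
      (hψ p).hasDerivAt)).congr_deriv (by simp only [Pi.div_apply]; ring)
  have hβγ : ∀ q, m q ^ β * (m q ^ γ * (deriv ψ q + γ * (deriv m q / m q) * ψ q)) =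
      m q ^ (β + γ) * (deriv ψ q + γ * (deriv m q / m q) * ψ q) := fun q => by
    rw [rpow_add (hpos q)]; ring
  rw [deriv_rpow_mul γ hm hpos hψ]
  simp only [hβγ]
  rw [(hasDerivAt_rpow_mul (β + γ) (hm p).hasDerivAt hmp hg).deriv, ← mul_assoc,
    ← rpow_add hmp, ← add_assoc]
  field_simp
  ring

/-- The von Roos ordered kinetic operator in second-order form.
For ambiguity parameters `α + β + γ = −1`, a positive `C²` mass function `m` and a
twice differentiable wavefunction `ψ`, for all `p`:
`−(1/4)·[m^α·(m^β·(m^γ·ψ)′)′ + m^γ·(m^β·(m^α·ψ)′)′](p)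
 = −(1/(2m))·[ψ″ − (m′/m)ψ′ + ((β+1)/2)(2m′²/m² − m″/m)ψ + α(α+β+1)(m′²/m²)ψ](p)`. -/
theorem stmt_18 (α β γ : ℝ) (habc : α + β + γ = -1)
    (m : ℝ → ℝ) (hm : ContDiff ℝ 2 m) (hmpos : ∀ p : ℝ, 0 < m p)
    (ψ : ℝ → ℝ)
    (hψ : ∀ p : ℝ, DifferentiableAt ℝ ψ p ∧ DifferentiableAt ℝ (deriv ψ) p) :
    ∀ p : ℝ,
      -(1 / 4) *
          (m p ^ α *
              deriv (fun q => m q ^ β * deriv (fun r => m r ^ γ * ψ r) q) p +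
            m p ^ γ *
              deriv (fun q => m q ^ β * deriv (fun r => m r ^ α * ψ r) q) p) =
        -(1 / (2 * m p)) *
          (deriv (deriv ψ) p - deriv m p / m p * deriv ψ p +
            (β + 1) / 2 *
              (2 * (deriv m p) ^ 2 / (m p) ^ 2 - deriv (deriv m) p / m p) * ψ p +
            α * (α + β + 1) * ((deriv m p) ^ 2 / (m p) ^ 2) * ψ p) := by
  intro p
  have hmd : Differentiable ℝ m := hm.differentiable (by norm_num)
  have hmd' : Differentiable ℝ (deriv m) :=
    (hm.deriv' (n := 1)).differentiable one_ne_zero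
  have hψd : Differentiable ℝ ψ := fun q => (hψ q).1
  rw [rpow_mul_deriv_rpow_mul_deriv_rpow_mul α β γ hmd (hmd' p) hmpos hψd (hψ p).2,
    rpow_mul_deriv_rpow_mul_deriv_rpow_mul γ β α hmd (hmd' p) hmpos hψd (hψ p).2,
    show γ + β + α = -1 by linarith, habc, rpow_neg_one]
  have hmp := (hmpos p).ne'
  obtain rfl : γ = -1 - α - β := by linarith
  field_simp
  ring
end
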